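/- arXiv:2109.12153 — 9 statements merged into one kernel-verified Lean document; each statement's English description precedes it below -/
import Mathlib

section
/- Let A and B be real n̄×n matrices such that every row and every column of A contains at most m̄ nonzero entries, and suppose |B_{ij}| ≤ c·|A_{ij}| for all i, j, where c > 0. Then ‖B‖₂ ≤ c · min(m̄, √(rank A)) · ‖A‖₂. -/
noncomputable section

/-- Spectral norm of a real matrix: operator norm induced by the Euclidean norms. -/
def specNorm {m n : ℕ} (A : Matrix (Fin m) (Fin n) ℝ) : ℝ :=
  ‖(Matrix.toEuclideanLin A).toContinuousLinearMap‖

/-!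
Two bounds are combined. Since every entry of `A` is at most `‖A‖₂` in absolute value, sparsity
bounds each row and column sum of `|B|` by `c m̄ ‖A‖₂`, and the Schur test turns this into
`‖B‖₂ ≤ c m̄ ‖A‖₂`. On the other hand `‖B‖₂ ≤ ‖B‖_F ≤ c ‖A‖_F`, and `‖A‖_F² = tr (Aᴴ A)` is a sum
of at most `rank A` nonzero eigenvalues of `Aᴴ A`, each at most `‖Aᴴ A‖₂ = ‖A‖₂²`.
-/

open scoped Matrix Matrix.Norms.L2Operator ComplexOrder
open Finset

lemma Finset.sum_norm_le_of_norm_le_mul_of_card_support_le {ι E F : Type*} [Fintype ι]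
    [NormedAddCommGroup E] [NormedAddCommGroup F] [DecidableEq E] {f : ι → E} {g : ι → F}
    {c M : ℝ} {k : ℕ} (hc : 0 ≤ c) (hM : 0 ≤ M) (hgf : ∀ i, ‖g i‖ ≤ c * ‖f i‖)
    (hf : ∀ i, ‖f i‖ ≤ M) (hk : #{i | f i ≠ 0} ≤ k) : ∑ i, ‖g i‖ ≤ c * k * M := by
  have hsupp : ∀ i, ‖g i‖ ≠ 0 → f i ≠ 0 := fun i hg hf0 =>
    hg <| le_antisymm (by simpa [hf0] using hgf i) (norm_nonneg _)
  calc ∑ i, ‖g i‖ = ∑ i with f i ≠ 0, ‖g i‖ := (sum_filter_of_ne fun i _ => hsupp i).symm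
    _ ≤ #{i | f i ≠ 0} • (c * M) :=
        sum_le_card_nsmul _ _ _ fun i _ => (hgf i).trans (by gcongr; exact hf i)
    _ ≤ c * k * M := by
        rw [nsmul_eq_mul, mul_left_comm, ← mul_assoc]
        gcongr

namespace Matrix

variable {𝕜 m n : Type*} [RCLike 𝕜] [Fintype n]

lemma norm_mulVec_apply_le (A : Matrix m n 𝕜) (x : n → 𝕜) (i : m) :
    ‖(A *ᵥ x) i‖ ≤ ∑ j, ‖A i j‖ * ‖x j‖ :=
  (norm_sum_le univ fun j => A i j * x j).trans_eq (by simp only [norm_mul])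

lemma norm_mulVec_apply_sq_le (A : Matrix m n 𝕜) (x : n → 𝕜) (i : m) :
    ‖(A *ᵥ x) i‖ ^ 2 ≤ (∑ j, ‖A i j‖) * ∑ j, ‖A i j‖ * ‖x j‖ ^ 2 :=
  (pow_le_pow_left₀ (norm_nonneg _) (A.norm_mulVec_apply_le x i) 2).trans <|
    sum_sq_le_sum_mul_sum_of_sq_le_mul _ (fun _ _ => norm_nonneg _) (fun _ _ => by positivity)
      fun _ _ => le_of_eq (by ring)

variable [Fintype m] [DecidableEq n]

lemma l2_opNorm_le_of_sum_sq_le {A : Matrix m n 𝕜} {K : ℝ} (hK : 0 ≤ K)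
    (h : ∀ x : n → 𝕜, ∑ i, ‖(A *ᵥ x) i‖ ^ 2 ≤ K ^ 2 * ∑ j, ‖x j‖ ^ 2) : ‖A‖ ≤ K := by
  refine ContinuousLinearMap.opNorm_le_bound _ hK fun x => ?_
  refine (pow_le_pow_iff_left₀ (norm_nonneg _) (by positivity) two_ne_zero).mp ?_
  simpa [mul_pow, EuclideanSpace.norm_sq_eq] using h x

lemma l2_opNorm_le_sqrt_of_sum_norm_row_col_le {A : Matrix m n 𝕜} {r c : ℝ} (hr : 0 ≤ r)
    (hc : 0 ≤ c) (hrow : ∀ i, ∑ j, ‖A i j‖ ≤ r) (hcol : ∀ j, ∑ i, ‖A i j‖ ≤ c) :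
    ‖A‖ ≤ √(r * c) := by
  refine l2_opNorm_le_of_sum_sq_le (Real.sqrt_nonneg _) fun x => ?_
  rw [Real.sq_sqrt (mul_nonneg hr hc)]
  calc ∑ i, ‖(A *ᵥ x) i‖ ^ 2 ≤ ∑ i, r * ∑ j, ‖A i j‖ * ‖x j‖ ^ 2 := by
        gcongr with i
        exact (A.norm_mulVec_apply_sq_le x i).trans (by gcongr; exact hrow i)
    _ = r * ∑ j, (∑ i, ‖A i j‖) * ‖x j‖ ^ 2 := by
        simp only [← mul_sum, sum_mul]
        rw [sum_comm]
    _ ≤ r * ∑ j, c * ‖x j‖ ^ 2 := by gcongr with j; exact hcol j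
    _ = r * c * ∑ j, ‖x j‖ ^ 2 := by rw [← mul_sum, mul_assoc]

lemma l2_opNorm_le_sqrt_sum_sq_norm (A : Matrix m n 𝕜) : ‖A‖ ≤ √(∑ i, ∑ j, ‖A i j‖ ^ 2) := by
  refine l2_opNorm_le_of_sum_sq_le (Real.sqrt_nonneg _) fun x => ?_
  rw [Real.sq_sqrt (by positivity), sum_mul]
  gcongr with i
  exact (pow_le_pow_left₀ (norm_nonneg _) (A.norm_mulVec_apply_le x i) 2).trans
    (sum_mul_sq_le_sq_mul_sq _ _ _)

lemma norm_entry_le_l2_opNorm (A : Matrix m n 𝕜) (i : m) (j : n) : ‖A i j‖ ≤ ‖A‖ := by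
  have h := A.l2_opNorm_mulVec (PiLp.single 2 j 1)
  simp only [PiLp.ofLp_single, mulVec_single_one, PiLp.norm_single, norm_one, mul_one] at h
  exact (PiLp.norm_apply_le _ i).trans h

lemma IsHermitian.abs_eigenvalues_le_l2_opNorm {A : Matrix n n 𝕜} (hA : A.IsHermitian) (i : n) :
    |hA.eigenvalues i| ≤ ‖A‖ := by
  have h := A.l2_opNorm_mulVec (hA.eigenvectorBasis i)
  rw [hA.mulVec_eigenvectorBasis i, hA.eigenvectorBasis.orthonormal.1 i, mul_one] at h
  simpa [norm_smul, hA.eigenvectorBasis.orthonormal.1 i] using h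

lemma sum_sq_norm_eq_sum_eigenvalues (A : Matrix m n 𝕜) :
    ∑ i, ∑ j, ‖A i j‖ ^ 2 = ∑ j, (isHermitian_conjTranspose_mul_self A).eigenvalues j := by
  have h := (isHermitian_conjTranspose_mul_self A).trace_eq_sum_eigenvalues
  rw [← RCLike.ofReal_inj (K := 𝕜)]
  push_cast
  rw [← h, trace, sum_comm]
  simp [mul_apply, RCLike.conj_mul]

lemma sum_sq_norm_le_rank_mul_l2_opNorm_sq (A : Matrix m n 𝕜) :
    ∑ i, ∑ j, ‖A i j‖ ^ 2 ≤ A.rank * ‖A‖ ^ 2 := by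
  have hA := isHermitian_conjTranspose_mul_self A
  rw [sum_sq_norm_eq_sum_eigenvalues, ← rank_conjTranspose_mul_self, hA.rank_eq_card_non_zero_eigs,
    Fintype.card_subtype, ← sum_filter_ne_zero, ← nsmul_eq_mul, sq,
    ← l2_opNorm_conjTranspose_mul_self]
  exact sum_le_card_nsmul _ _ _ fun j _ => (le_abs_self _).trans (hA.abs_eigenvalues_le_l2_opNorm j)

variable {A B : Matrix m n 𝕜} {c : ℝ}

lemma l2_opNorm_le_mul_sqrt_rank_mul_of_norm_le (hc : 0 ≤ c) (hB : ∀ i j, ‖B i j‖ ≤ c * ‖A i j‖) :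
    ‖B‖ ≤ c * √A.rank * ‖A‖ := by
  have hsum : ∑ i, ∑ j, ‖B i j‖ ^ 2 ≤ c ^ 2 * (A.rank * ‖A‖ ^ 2) :=
    calc ∑ i, ∑ j, ‖B i j‖ ^ 2 ≤ ∑ i, ∑ j, (c * ‖A i j‖) ^ 2 := by gcongr with i _ j; exact hB i j
      _ = c ^ 2 * ∑ i, ∑ j, ‖A i j‖ ^ 2 := by simp only [mul_pow, mul_sum]
      _ ≤ c ^ 2 * (A.rank * ‖A‖ ^ 2) := by gcongr; exact A.sum_sq_norm_le_rank_mul_l2_opNorm_sq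
  calc ‖B‖ ≤ √(∑ i, ∑ j, ‖B i j‖ ^ 2) := B.l2_opNorm_le_sqrt_sum_sq_norm
    _ ≤ √(c ^ 2 * (A.rank * ‖A‖ ^ 2)) := Real.sqrt_le_sqrt hsum
    _ = c * √A.rank * ‖A‖ := by
        rw [Real.sqrt_mul (sq_nonneg c), Real.sqrt_sq hc, Real.sqrt_mul (Nat.cast_nonneg _),
          Real.sqrt_sq (norm_nonneg A), mul_assoc]

lemma l2_opNorm_le_mul_mul_of_norm_le_of_card_support_le [DecidableEq 𝕜] {k : ℕ} (hc : 0 ≤ c)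
    (hrow : ∀ i, #{j | A i j ≠ 0} ≤ k) (hcol : ∀ j, #{i | A i j ≠ 0} ≤ k)
    (hB : ∀ i j, ‖B i j‖ ≤ c * ‖A i j‖) : ‖B‖ ≤ c * k * ‖A‖ := by
  have hK : 0 ≤ c * k * ‖A‖ := by positivity
  refine (Real.sqrt_mul_self hK).symm ▸ l2_opNorm_le_sqrt_of_sum_norm_row_col_le hK hK
    (fun i => ?_) (fun j => ?_)
  · exact sum_norm_le_of_norm_le_mul_of_card_support_le hc (norm_nonneg A) (hB i)
      (A.norm_entry_le_l2_opNorm i) (hrow i)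
  · exact sum_norm_le_of_norm_le_mul_of_card_support_le hc (norm_nonneg A) (hB · j)
      (A.norm_entry_le_l2_opNorm · j) (hcol j)

end Matrix

/-- if every row and column of `A` has at most `mbar` nonzero entries and
`|B i j| ≤ c * |A i j|` entrywise, then `‖B‖₂ ≤ c * min(mbar, √(rank A)) * ‖A‖₂`. -/
theorem spectral_norm_entrywise_dominated
    {nbar n : ℕ} (mbar : ℕ) (A B : Matrix (Fin nbar) (Fin n) ℝ) (c : ℝ) (hc : 0 < c)
    (hrow : ∀ i, (Finset.univ.filter fun j => A i j ≠ 0).card ≤ mbar)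
    (hcol : ∀ j, (Finset.univ.filter fun i => A i j ≠ 0).card ≤ mbar)
    (hB : ∀ i j, |B i j| ≤ c * |A i j|) :
    specNorm B ≤ c * min (mbar : ℝ) (Real.sqrt (A.rank : ℝ)) * specNorm A := by
  change ‖B‖ ≤ c * min (mbar : ℝ) √A.rank * ‖A‖
  rw [mul_min_of_nonneg _ _ hc.le, min_mul_of_nonneg _ _ (norm_nonneg A)]
  exact le_min (Matrix.l2_opNorm_le_mul_mul_of_norm_le_of_card_support_le hc.le hrow hcol hB)
    (Matrix.l2_opNorm_le_mul_sqrt_rank_mul_of_norm_le hc.le hB)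
end
end

section
/- Let s ≥ 1, ω0, ω1 ∈ ℝ, let b_0, …, b_s ∈ ℝ be nonzero, and define μ_j, ν_j, κ_j as in the RKC coefficients. Let A be a real n×n matrix, Δt ∈ ℝ, and r_1, …, r_s ∈ ℝⁿ. Define d_0 = 0, d_1 = r_1, and d_j = ν_j d_{j−1} + κ_j d_{j−2} + μ_j Δt A d_{j−1} + r_j for 2 ≤ j ≤ s. Then for every 1 ≤ k ≤ s, d_k = Σ_{j=1}^{k} (b_k/b_j) · U_{k−j}(ω0 I + ω1 Δt A) · r_j. -/
noncomputable section

/-- Chebyshev polynomial of the first kind, evaluated in an arbitrary ring. -/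
def chebT (R : Type*) [Ring R] : ℕ → R → R
  | 0, _ => 1
  | 1, x => x
  | n + 2, x => 2 * x * chebT R (n + 1) x - chebT R n x

/-- Chebyshev polynomial of the second kind, evaluated in an arbitrary ring. -/
def chebU (R : Type*) [Ring R] : ℕ → R → R
  | 0, _ => 1
  | 1, x => 2 * x
  | n + 2, x => 2 * x * chebU R (n + 1) x - chebU R n x

lemma chebU_add_one (R : Type*) [Ring R] (x : R) (t : ℕ) :
    chebU R (t+1) x = 2*x*chebU R t x - (if t = 0 then 0 else chebU R (t-1) x) := by
  match t with
  | 0 => simp [chebU]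
  | u+1 => simp [chebU]

/-- the solution of the perturbed RKC three-term recursion is given by the
Chebyshev-polynomial sum `d_k = Σ_{j=1}^k (b_k/b_j) U_{k-j}(ω0 I + ω1 Δt A) r_j`. -/
theorem rkc_perturbation_formula
    {n : ℕ} (s : ℕ) (hs : 1 ≤ s) (ω0 ω1 : ℝ) (b : ℕ → ℝ) (hb : ∀ j, j ≤ s → b j ≠ 0)
    (μ ν κ : ℕ → ℝ)
    (hμ1 : μ 1 = b 1 * ω1)
    (hμ : ∀ j, 2 ≤ j → j ≤ s → μ j = 2 * ω1 * b j / b (j - 1))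
    (hν : ∀ j, 2 ≤ j → j ≤ s → ν j = 2 * ω0 * b j / b (j - 1))
    (hκ : ∀ j, 2 ≤ j → j ≤ s → κ j = -(b j / b (j - 2)))
    (A : Matrix (Fin n) (Fin n) ℝ) (Δt : ℝ)
    (r d : ℕ → (Fin n → ℝ))
    (hd0 : d 0 = 0) (hd1 : d 1 = r 1)
    (hd : ∀ j, 2 ≤ j → j ≤ s →
      d j = ν j • d (j - 1) + κ j • d (j - 2) + (μ j * Δt) • A.mulVec (d (j - 1)) + r j) :
    ∀ k, 1 ≤ k → k ≤ s →
      d k = ∑ j ∈ Finset.Icc 1 k, (b k / b j) •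
        (chebU (Matrix (Fin n) (Fin n) ℝ) (k - j)
          (ω0 • (1 : Matrix (Fin n) (Fin n) ℝ) + (ω1 * Δt) • A)).mulVec (r j) := by
  set M := ω0 • (1 : Matrix (Fin n) (Fin n) ℝ) + (ω1 * Δt) • A with hM
  suffices H : ∀ k, k ≤ s →
      d k = ∑ j ∈ Finset.Icc 1 k, (b k / b j) •
        (chebU (Matrix (Fin n) (Fin n) ℝ) (k - j) M).mulVec (r j) by
    intro k _ hk2; exact H k hk2
  intro k
  induction k using Nat.strong_induction_on with
  | _ k ih =>
    match k with
    | 0 => intro _; simp [hd0]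
    | 1 =>
      intro h1
      rw [hd1, show Finset.Icc 1 1 = {1} from rfl]
      simp [chebU, Matrix.one_mulVec, div_self (hb 1 h1)]
    | (m+2) =>
      intro hk
      have hb1 : b (m+1) ≠ 0 := hb _ (by omega)
      have hbm : b m ≠ 0 := hb _ (by omega)
      have hbk : b (m+2) ≠ 0 := hb _ hk
      have hIH1 := ih (m+1) (by omega) (by omega)
      have hIH2 := ih m (by omega) (by omega)
      rw [hd (m+2) (by omega) hk, hν _ (by omega) hk, hκ _ (by omega) hk,
        hμ _ (by omega) hk]
      simp only [show m+2-1 = m+1 from rfl, show m+2-2 = m from rfl]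
      rw [hIH1, hIH2]
      rw [Finset.sum_Icc_succ_top (by omega : 1 ≤ m+2)]
      have htop : (b (m+2) / b (m+2)) •
          (chebU (Matrix (Fin n) (Fin n) ℝ) (m+2-(m+2)) M).mulVec (r (m+2)) = r (m+2) := by
        simp [chebU, Matrix.one_mulVec, div_self hbk]
      rw [htop]
      congr 1
      -- rewrite RHS terms using the chebU recurrence
      have hterm : ∀ j ∈ Finset.Icc 1 (m+1),
          (b (m+2) / b j) • (chebU (Matrix (Fin n) (Fin n) ℝ) (m+2-j) M).mulVec (r j)
          = (b (m+2) / b j) • ((2*(M*chebU (Matrix (Fin n) (Fin n) ℝ) (m+1-j) M)).mulVec (r j))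
            - (if j ≤ m then (b (m+2) / b j) •
                (chebU (Matrix (Fin n) (Fin n) ℝ) (m-j) M).mulVec (r j) else 0) := by
        intro j hj
        simp only [Finset.mem_Icc] at hj
        rw [show m+2-j = (m+1-j)+1 by omega, chebU_add_one]
        by_cases hjm : j ≤ m
        · rw [if_pos hjm, if_neg (by omega : ¬ m+1-j = 0), show m+1-j-1 = m-j by omega]
          rw [Matrix.sub_mulVec, smul_sub, mul_assoc]
        · rw [if_neg hjm, if_pos (by omega : m+1-j = 0)]
          rw [Matrix.sub_mulVec, smul_sub, mul_assoc]
          simp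
      rw [Finset.sum_congr rfl hterm, Finset.sum_sub_distrib]
      -- the subtracted sum
      have hsub : ∑ j ∈ Finset.Icc 1 (m+1),
          (if j ≤ m then (b (m+2) / b j) •
            (chebU (Matrix (Fin n) (Fin n) ℝ) (m-j) M).mulVec (r j) else 0)
          = ∑ j ∈ Finset.Icc 1 m,
            (b (m+2) / b j) • (chebU (Matrix (Fin n) (Fin n) ℝ) (m-j) M).mulVec (r j) := by
        rw [Finset.sum_Icc_succ_top (by omega : 1 ≤ m+1), if_neg (by omega : ¬ m+1 ≤ m), add_zero]
        exact Finset.sum_congr rfl fun j hj => by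
          simp only [Finset.mem_Icc] at hj; rw [if_pos hj.2]
      rw [hsub]
      -- now push everything into the sums on the left
      rw [Finset.smul_sum, Finset.smul_sum]
      have hAmul : A.mulVec (∑ j ∈ Finset.Icc 1 (m+1),
          (b (m+1) / b j) • (chebU (Matrix (Fin n) (Fin n) ℝ) (m+1-j) M).mulVec (r j))
          = ∑ j ∈ Finset.Icc 1 (m+1),
            (b (m+1) / b j) • (A * chebU (Matrix (Fin n) (Fin n) ℝ) (m+1-j) M).mulVec (r j) := by
        rw [← Matrix.mulVecLin_apply, map_sum]
        exact Finset.sum_congr rfl fun j _ => by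
          rw [map_smul, Matrix.mulVecLin_apply, Matrix.mulVec_mulVec]
      rw [hAmul, Finset.smul_sum]
      rw [add_right_comm, ← Finset.sum_add_distrib]
      have hB : ∑ x ∈ Finset.Icc 1 m,
          (-(b (m+2) / b m)) • (b m / b x) • (chebU (Matrix (Fin n) (Fin n) ℝ) (m-x) M).mulVec (r x)
          = - ∑ x ∈ Finset.Icc 1 m,
            (b (m+2) / b x) • (chebU (Matrix (Fin n) (Fin n) ℝ) (m-x) M).mulVec (r x) := by
        rw [← Finset.sum_neg_distrib]
        refine Finset.sum_congr rfl fun x hx => ?_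
        simp only [Finset.mem_Icc] at hx
        have hbx : b x ≠ 0 := hb x (by omega)
        rw [← neg_smul, smul_smul]
        congr 1
        field_simp
      rw [hB, ← sub_eq_add_neg]
      congr 1
      apply Finset.sum_congr rfl
      intro j hj
      simp only [Finset.mem_Icc] at hj
      have hMU : 2*(M*chebU (Matrix (Fin n) (Fin n) ℝ) (m+1-j) M)
          = (2*ω0) • chebU (Matrix (Fin n) (Fin n) ℝ) (m+1-j) M
            + (2*(ω1*Δt)) • (A * chebU (Matrix (Fin n) (Fin n) ℝ) (m+1-j) M) := by
        rw [hM, Matrix.add_mul, Matrix.smul_mul, Matrix.smul_mul, Matrix.one_mul, two_mul]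
        module
      have hbj : b j ≠ 0 := hb j (by omega)
      rw [hMU, Matrix.add_mulVec, Matrix.smul_mulVec, Matrix.smul_mulVec]
      match_scalars <;> (field_simp)
end
end

section
/- Let s ≥ 1, ω0, ω1 ∈ ℝ, let b_0, …, b_s ∈ ℝ be nonzero, set a_j = 1 − b_j T_j(ω0), and define the RKC coefficients μ_j, ν_j, κ_j, γ_j. Define c_0 = 0, c_1 = μ_1, and c_j = ν_j c_{j−1} + κ_j c_{j−2} + μ_j + γ_j for 2 ≤ j ≤ s. Then c_k = b_k ω1 k U_{k−1}(ω0) for every 1 ≤ k ≤ s. -/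
noncomputable section

/-!
Dividing the recursion for `c_j` by `b_j` removes the weights: since `μ_j + γ_j = μ_j b_{j-1} T_{j-1}(ω0)
= 2 ω1 b_j T_{j-1}(ω0)`, the quotients `d_j = c_j / b_j` satisfy
`d_j = 2 ω0 d_{j-1} - d_{j-2} + 2 ω1 T_{j-1}(ω0)` with `d_0 = 0`, `d_1 = ω1`.
This is `ω1` times the recursion obtained by differentiating `T_j = 2x T_{j-1} - T_{j-2}`,
so `d_j = ω1 T_j'(ω0) = ω1 j U_{j-1}(ω0)`.
-/

section Chebyshev

variable {R : Type*} [CommRing R]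

theorem chebT_add_two_eq (x : R) : ∀ n, chebT R (n + 2) x = x * chebU R (n + 1) x - chebU R n x
  | 0 => by simp only [chebT, chebU]; ring
  | 1 => by simp only [chebT, chebU]; ring
  | n + 2 => by
    have h₁ := chebT_add_two_eq x (n + 1)
    have h₀ := chebT_add_two_eq x n
    have hU₂ : chebU R (n + 2) x = 2 * x * chebU R (n + 1) x - chebU R n x := rfl
    have hU₃ : chebU R (n + 3) x = 2 * x * chebU R (n + 2) x - chebU R (n + 1) x := rfl
    rw [chebT, h₁, h₀, hU₃, hU₂]
    ring

theorem natCast_mul_chebU_add_two (x : R) (n : ℕ) :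
    ((n + 2 : ℕ) : R) * chebU R (n + 1) x =
      2 * x * (((n + 1 : ℕ) : R) * chebU R n x) - (n : R) * chebU R (n - 1) x
        + 2 * chebT R (n + 1) x := by
  cases n with
  | zero => simp only [chebU, chebT]; push_cast; ring
  | succ m =>
    rw [chebT_add_two_eq, chebU]
    simp only [Nat.add_sub_cancel]
    push_cast
    ring

theorem eq_mul_natCast_mul_chebU_of_recurrence (s : ℕ) (x ω : R) (d : ℕ → R)
    (h0 : d 0 = 0) (h1 : d 1 = ω)
    (hrec : ∀ n, n + 2 ≤ s → d (n + 2) = 2 * x * d (n + 1) - d n + 2 * ω * chebT R (n + 1) x) :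
    ∀ k ≤ s, d k = ω * k * chebU R (k - 1) x
  | 0, _ => by simp [h0]
  | 1, _ => by simp [h1, chebU]
  | n + 2, hn => by
    have ih₁ := eq_mul_natCast_mul_chebU_of_recurrence s x ω d h0 h1 hrec (n + 1) (by omega)
    have ih₀ := eq_mul_natCast_mul_chebU_of_recurrence s x ω d h0 h1 hrec n (by omega)
    rw [Nat.add_sub_cancel] at ih₁
    rw [show n + 2 - 1 = n + 1 from rfl, hrec n hn, ih₁, ih₀, mul_assoc ω ((n + 2 : ℕ) : R),
      natCast_mul_chebU_add_two]
    ring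

end Chebyshev

/-- the RKC abscissae `c_k` defined by the three-term recursion satisfy
`c_k = b_k ω1 k U_{k−1}(ω0)`. -/
theorem rkc_abscissae_formula
    (s : ℕ) (hs : 1 ≤ s) (ω0 ω1 : ℝ) (b : ℕ → ℝ) (hb : ∀ j, j ≤ s → b j ≠ 0)
    (μ ν κ γ c : ℕ → ℝ)
    (hμ1 : μ 1 = b 1 * ω1)
    (hμ : ∀ j, 2 ≤ j → j ≤ s → μ j = 2 * ω1 * b j / b (j - 1))
    (hν : ∀ j, 2 ≤ j → j ≤ s → ν j = 2 * ω0 * b j / b (j - 1))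
    (hκ : ∀ j, 2 ≤ j → j ≤ s → κ j = -(b j / b (j - 2)))
    (hγ : ∀ j, 2 ≤ j → j ≤ s → γ j = -(μ j * (1 - b (j - 1) * chebT ℝ (j - 1) ω0)))
    (hc0 : c 0 = 0) (hc1 : c 1 = μ 1)
    (hc : ∀ j, 2 ≤ j → j ≤ s → c j = ν j * c (j - 1) + κ j * c (j - 2) + μ j + γ j) :
    ∀ k, 1 ≤ k → k ≤ s → c k = b k * ω1 * k * chebU ℝ (k - 1) ω0 := by
  have hrec : ∀ n, n + 2 ≤ s → c (n + 2) / b (n + 2) =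
      2 * ω0 * (c (n + 1) / b (n + 1)) - c n / b n + 2 * ω1 * chebT ℝ (n + 1) ω0 := by
    intro n hn
    have hb₂ := hb (n + 2) hn
    have hb₁ := hb (n + 1) (by omega)
    have hb₀ := hb n (by omega)
    rw [hc _ le_add_self hn, hν _ le_add_self hn, hκ _ le_add_self hn, hγ _ le_add_self hn,
      hμ _ le_add_self hn]
    simp only [show n + 2 - 1 = n + 1 from rfl, Nat.add_sub_cancel]
    field_simp
    ring
  have hd := eq_mul_natCast_mul_chebU_of_recurrence s ω0 ω1 (fun k ↦ c k / b k)
    (by simp [hc0]) (by rw [hc1, hμ1, mul_div_cancel_left₀ _ (hb 1 hs)]) hrec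
  intro k _ hk
  rw [mul_assoc, mul_assoc, ← mul_assoc ω1, ← hd k hk, mul_div_cancel₀ _ (hb k hk)]
end
end

section
/- Let ω0 ≥ 1, ω1 > 0, let b_0, …, b_s > 0, let w_1, …, w_s ≥ 0, and let A be a real symmetric n×n matrix all of whose eigenvalues lie in [−ρ, 0] for some ρ ≥ 0. Let Δt > 0 satisfy Δt·ρ ≤ 2ω0/ω1. Let r_1, …, r_s ∈ ℝⁿ and, for 1 ≤ k ≤ s, set d_k = Σ_{j=1}^{k} (b_k/b_j) w_j U_{k−j}(ω0 I + ω1 Δt A) r_j. Then ‖d_k‖₂ ≤ ( Σ_{j=1}^{k} (b_k/b_j) w_j U_{k−j}(ω0) ) · max_{1≤j≤k} ‖r_j‖₂. -/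
noncomputable section

open Real

lemma abs_sin_nat_mul_le (θ : ℝ) : ∀ m : ℕ, |Real.sin (m * θ)| ≤ m * |Real.sin θ| := by
  intro m
  induction m with
  | zero => simp
  | succ k ih =>
    have : ((k:ℝ)+1) * θ = k * θ + θ := by ring
    push_cast
    rw [this, Real.sin_add]
    calc |Real.sin (k*θ) * Real.cos θ + Real.cos (k*θ) * Real.sin θ|
        ≤ |Real.sin (k*θ) * Real.cos θ| + |Real.cos (k*θ) * Real.sin θ| := abs_add_le _ _
      _ ≤ |Real.sin (k*θ)| * 1 + 1 * |Real.sin θ| := by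
          rw [abs_mul, abs_mul]
          gcongr <;> [exact Real.abs_cos_le_one θ; exact Real.abs_cos_le_one _]
      _ ≤ k * |Real.sin θ| + 1 * |Real.sin θ| := by rw [mul_one]; gcongr
      _ = ((k:ℝ)+1) * |Real.sin θ| := by ring

lemma chebU_cos : ∀ (m : ℕ) (θ : ℝ), chebU ℝ m (Real.cos θ) * Real.sin θ = Real.sin ((m+1)*θ)
  | 0, θ => by simp [chebU]
  | 1, θ => by
      simp only [chebU]
      have : ((1:ℕ)+(1:ℝ))*θ = θ + θ := by push_cast; ring
      rw [this, Real.sin_add]; ring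
  | (m+2), θ => by
      have h1 := chebU_cos (m+1) θ
      have h0 := chebU_cos m θ
      simp only [chebU]
      push_cast at h1 h0 ⊢
      have e3 : ((m:ℝ)+2+1)*θ = ((m:ℝ)+1+1)*θ + θ := by ring
      have e1 : ((m:ℝ)+1)*θ = ((m:ℝ)+1+1)*θ - θ := by ring
      rw [e3, Real.sin_add]
      rw [e1, Real.sin_sub] at h0
      linear_combination 2*Real.cos θ*h1 - h0

lemma chebU_one : ∀ m : ℕ, chebU ℝ m 1 = m + 1
  | 0 => by simp [chebU]
  | 1 => by simp [chebU]; norm_num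
  | (m+2) => by
      have h1 := chebU_one (m+1)
      have h0 := chebU_one m
      simp only [chebU, h1, h0]
      push_cast; ring

lemma chebU_neg (x : ℝ) : ∀ m : ℕ, chebU ℝ m (-x) = (-1)^m * chebU ℝ m x
  | 0 => by simp [chebU]
  | 1 => by simp [chebU]
  | (m+2) => by
      simp only [chebU, chebU_neg x (m+1), chebU_neg x m]
      ring

lemma chebAB (x : ℝ) : ∀ m : ℕ,
    chebT ℝ (m+2) x = x * chebT ℝ (m+1) x + (x^2-1) * chebU ℝ m x ∧
    chebU ℝ (m+1) x = x * chebU ℝ m x + chebT ℝ (m+1) x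
  | 0 => by constructor <;> (simp only [chebT, chebU]; ring)
  | (m+1) => by
      obtain ⟨hA, hB⟩ := chebAB x m
      constructor
      · show 2 * x * chebT ℝ (m+2) x - chebT ℝ (m+1) x = _
        linear_combination x * hA - (x^2-1) * hB
      · show 2 * x * chebU ℝ (m+1) x - chebU ℝ m x = _
        linear_combination x * hB - hA

lemma cheb_mono {t y : ℝ} (ht : 1 ≤ t) (hty : t ≤ y) : ∀ m : ℕ,
    (0 ≤ chebT ℝ (m+1) t ∧ chebT ℝ (m+1) t ≤ chebT ℝ (m+1) y) ∧
    (0 ≤ chebU ℝ m t ∧ chebU ℝ m t ≤ chebU ℝ m y) := by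
  have hy : 1 ≤ y := le_trans ht hty
  intro m
  induction m with
  | zero => exact ⟨⟨by simpa [chebT] using le_trans zero_le_one ht, by simpa [chebT]⟩,
      ⟨by simp [chebU], by simp [chebU]⟩⟩
  | succ m ih =>
    obtain ⟨⟨hT0, hT⟩, ⟨hU0, hU⟩⟩ := ih
    have ht0 : (0:ℝ) ≤ t := le_trans zero_le_one ht
    have hy0 : (0:ℝ) ≤ y := le_trans zero_le_one hy
    have hsq : (0:ℝ) ≤ t^2 - 1 := by nlinarith
    have hsqy : t^2 - 1 ≤ y^2 - 1 := by nlinarith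
    have hAt := (chebAB t m).1
    have hAy := (chebAB y m).1
    have hBt := (chebAB t m).2
    have hBy := (chebAB y m).2
    refine ⟨⟨?_, ?_⟩, ⟨?_, ?_⟩⟩
    · rw [hAt]; positivity
    · rw [hAt, hAy]
      gcongr <;> nlinarith
    · rw [hBt]; positivity
    · rw [hBt, hBy]
      gcongr <;> nlinarith

lemma chebU_nonneg {y : ℝ} (hy : 1 ≤ y) (m : ℕ) : 0 ≤ chebU ℝ m y :=
  ((cheb_mono hy le_rfl m).2).1

lemma chebU_le_chebU {t y : ℝ} (ht : 1 ≤ t) (hty : t ≤ y) (m : ℕ) :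
    chebU ℝ m t ≤ chebU ℝ m y := ((cheb_mono ht hty m).2).2

lemma chebU_abs_le_of_abs_le_one {x : ℝ} (hx : |x| ≤ 1) (m : ℕ) :
    |chebU ℝ m x| ≤ m + 1 := by
  have hx1 : -1 ≤ x := neg_le_of_abs_le hx
  have hx2 : x ≤ 1 := le_of_abs_le hx
  set θ := Real.arccos x with hθ
  have hcos : Real.cos θ = x := Real.cos_arccos hx1 hx2
  have hsin : 0 ≤ Real.sin θ := Real.sin_nonneg_of_nonneg_of_le_pi (Real.arccos_nonneg x)
    (Real.arccos_le_pi x)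
  rcases eq_or_lt_of_le hsin with hs0 | hs0
  · -- sin θ = 0, so x = 1 or x = -1
    have hx2' : x^2 = 1 := by
      have := Real.sin_sq_add_cos_sq θ
      rw [hcos, ← hs0] at this; nlinarith
    rcases mul_self_eq_one_iff.1 (by nlinarith : x * x = 1) with h | h
    · rw [h, chebU_one]; rw [abs_of_nonneg (by positivity)]
    · rw [h, show (-1:ℝ) = -(1:ℝ) from rfl, chebU_neg, chebU_one, abs_mul, abs_pow,
        abs_neg, abs_one, one_pow, one_mul, abs_of_nonneg (by positivity)]
  · have key := chebU_cos m θ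
    rw [hcos] at key
    have habs : |chebU ℝ m x| * Real.sin θ ≤ (m+1) * Real.sin θ := by
      calc |chebU ℝ m x| * Real.sin θ = |chebU ℝ m x * Real.sin θ| := by
            rw [abs_mul, abs_of_nonneg hsin]
        _ = |Real.sin ((m+1) * θ)| := by rw [key]
        _ ≤ (m+1) * |Real.sin θ| := by
            have := abs_sin_nat_mul_le θ (m+1)
            push_cast at this ⊢; exact this
        _ = (m+1) * Real.sin θ := by rw [abs_of_nonneg hsin]
    exact le_of_mul_le_mul_right habs hs0

lemma chebU_abs_le {x y : ℝ} (hy : 1 ≤ y) (hx : |x| ≤ y) (m : ℕ) :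
    |chebU ℝ m x| ≤ chebU ℝ m y := by
  rcases le_or_gt |x| 1 with h | h
  · calc |chebU ℝ m x| ≤ m + 1 := chebU_abs_le_of_abs_le_one h m
      _ = chebU ℝ m 1 := (chebU_one m).symm
      _ ≤ chebU ℝ m y := chebU_le_chebU le_rfl hy m
  · have h1 : 1 ≤ |x| := le_of_lt h
    have habs : |chebU ℝ m x| = chebU ℝ m |x| := by
      rcases abs_choice x with hc | hc
      · rw [hc, abs_of_nonneg (chebU_nonneg (hc ▸ h1) m)]
      · have hnn : 0 ≤ chebU ℝ m (-x) := chebU_nonneg (by rw [← hc]; exact h1) m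
        rw [hc, ← abs_of_nonneg hnn, chebU_neg, abs_mul, abs_pow, abs_neg, abs_one, one_pow,
          one_mul]
    rw [habs]
    exact chebU_le_chebU h1 hx m

open Matrix in
lemma chebU_mulVec {n : ℕ} (M : Matrix (Fin n) (Fin n) ℝ) (v : Fin n → ℝ) (μ : ℝ)
    (hv : M *ᵥ v = μ • v) :
    ∀ m : ℕ, (chebU (Matrix (Fin n) (Fin n) ℝ) m M) *ᵥ v = (chebU ℝ m μ) • v
  | 0 => by simp [chebU]
  | 1 => by
      simp only [chebU]
      rw [two_mul, Matrix.add_mulVec, hv, two_mul, add_smul]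
  | (m+2) => by
      have h1 := chebU_mulVec M v μ hv (m+1)
      have h0 := chebU_mulVec M v μ hv m
      simp only [chebU]
      rw [Matrix.sub_mulVec, two_mul, add_mul, Matrix.add_mulVec, ← Matrix.mulVec_mulVec, h1, Matrix.mulVec_smul, hv,
        h0, smul_smul]
      module

lemma onb_diag_norm_le {ι : Type*} [Fintype ι] [DecidableEq ι] {E : Type*}
    [NormedAddCommGroup E] [InnerProductSpace ℝ E]
    (e : OrthonormalBasis ι ℝ E) (B : E →ₗ[ℝ] E) (c : ι → ℝ)
    (hB : ∀ i, B (e i) = c i • e i) (C : ℝ) (hC0 : 0 ≤ C) (hC : ∀ i, |c i| ≤ C)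
    (v : E) : ‖B v‖ ≤ C * ‖v‖ := by
  have hrepr : ∀ i, e.repr (B v) i = c i * e.repr v i := by
    intro i
    have hv : v = ∑ j, e.repr v j • e j := (e.sum_repr v).symm
    have : B v = ∑ j, (e.repr v j * c j) • e j := by
      conv_lhs => rw [hv]
      rw [map_sum]
      refine Finset.sum_congr rfl fun j _ => ?_
      rw [map_smul, hB j, smul_smul]
    have horth := orthonormal_iff_ite.mp e.orthonormal
    rw [e.repr_apply_apply, this, inner_sum]
    simp only [real_inner_smul_right, horth]
    simp [Finset.sum_ite_eq', mul_comm]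
  have h1 : ‖B v‖ = ‖e.repr (B v)‖ := (e.repr.norm_map _).symm
  have h2 : ‖v‖ = ‖e.repr v‖ := (e.repr.norm_map _).symm
  rw [h1, h2, EuclideanSpace.norm_eq, EuclideanSpace.norm_eq]
  rw [← Real.sqrt_sq hC0, ← Real.sqrt_mul (by positivity)]
  apply Real.sqrt_le_sqrt
  rw [Finset.mul_sum]
  refine Finset.sum_le_sum fun i _ => ?_
  rw [hrepr i]
  simp only [Real.norm_eq_abs, abs_mul, mul_pow, sq_abs]
  have h := sq_le_sq' (neg_le_of_abs_le (hC i)) (le_of_abs_le (hC i))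
  exact mul_le_mul_of_nonneg_right h (sq_nonneg _)


open Matrix in
/-- with nonnegative weights and a symmetric matrix whose spectrum lies in
`[−ρ, 0]` with `Δt ρ ≤ 2ω0/ω1`, the Chebyshev sums `d_k` satisfy
`‖d_k‖₂ ≤ (Σ_j (b_k/b_j) w_j U_{k−j}(ω0)) · max_j ‖r_j‖₂`. -/
theorem rkc_perturbation_norm_bound
    {n : ℕ} (s : ℕ) (ω0 ω1 : ℝ) (hω0 : 1 ≤ ω0) (hω1 : 0 < ω1)
    (b : ℕ → ℝ) (hb : ∀ j, j ≤ s → 0 < b j)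
    (w : ℕ → ℝ) (hw : ∀ j, 1 ≤ j → j ≤ s → 0 ≤ w j)
    (A : Matrix (Fin n) (Fin n) ℝ) (hA : A.IsHermitian)
    (ρ : ℝ) (hρ : 0 ≤ ρ) (heig : ∀ i, hA.eigenvalues i ∈ Set.Icc (-ρ) 0)
    (Δt : ℝ) (hΔt : 0 < Δt) (hstab : Δt * ρ ≤ 2 * ω0 / ω1)
    (r : ℕ → EuclideanSpace ℝ (Fin n))
    (d : ℕ → EuclideanSpace ℝ (Fin n))
    (hd : ∀ k, 1 ≤ k → k ≤ s → d k = ∑ j ∈ Finset.Icc 1 k,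
      (b k / b j * w j) • Matrix.toEuclideanLin
        (chebU (Matrix (Fin n) (Fin n) ℝ) (k - j)
          (ω0 • (1 : Matrix (Fin n) (Fin n) ℝ) + (ω1 * Δt) • A)) (r j)) :
    ∀ k, (hk1 : 1 ≤ k) → k ≤ s →
      ‖d k‖ ≤ (∑ j ∈ Finset.Icc 1 k, b k / b j * w j * chebU ℝ (k - j) ω0) *
        (Finset.Icc 1 k).sup' (Finset.nonempty_Icc.mpr hk1) (fun j => ‖r j‖) := by
  intro k hk1 hks
  set M : Matrix (Fin n) (Fin n) ℝ := ω0 • (1 : Matrix (Fin n) (Fin n) ℝ) + (ω1 * Δt) • A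
    with hM
  set e := hA.eigenvectorBasis with he
  -- the shifted eigenvalues
  set x : Fin n → ℝ := fun i => ω0 + ω1 * Δt * hA.eigenvalues i with hx
  have hstab' : Δt * ρ * ω1 ≤ 2 * ω0 := (le_div_iff₀ hω1).mp hstab
  have hxabs : ∀ i, |x i| ≤ ω0 := by
    intro i
    obtain ⟨h1, h2⟩ := heig i
    have hxi : x i = ω0 + ω1 * Δt * hA.eigenvalues i := rfl
    rw [hxi, abs_le]
    constructor
    · nlinarith [mul_nonneg (mul_nonneg hω1.le hΔt.le)
        (by linarith : (0:ℝ) ≤ hA.eigenvalues i + ρ)]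
    · nlinarith [mul_nonneg (mul_nonneg hω1.le hΔt.le) (by linarith : (0:ℝ) ≤ -hA.eigenvalues i)]
  -- eigenvector property of M
  have hMe : ∀ i, M *ᵥ ⇑(e i) = x i • ⇑(e i) := by
    intro i
    rw [hM, Matrix.add_mulVec, Matrix.smul_mulVec, Matrix.smul_mulVec,
      Matrix.one_mulVec, hA.mulVec_eigenvectorBasis, smul_smul, ← add_smul]
  -- action of chebU matrices on the eigenbasis, as EuclideanSpace maps
  have hBe : ∀ (m : ℕ) (i : Fin n),
      Matrix.toEuclideanLin (chebU (Matrix (Fin n) (Fin n) ℝ) m M) (e i)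
        = chebU ℝ m (x i) • e i := by
    intro m i
    have key := chebU_mulVec M (⇑(e i)) (x i) (hMe i) m
    rw [Matrix.toEuclideanLin_apply]
    ext l
    have := congrFun key l
    simpa [WithLp.equiv] using this
  -- norm bound for each chebU matrix
  have hnorm : ∀ (m : ℕ) (v : EuclideanSpace ℝ (Fin n)),
      ‖Matrix.toEuclideanLin (chebU (Matrix (Fin n) (Fin n) ℝ) m M) v‖
        ≤ chebU ℝ m ω0 * ‖v‖ := by
    intro m v
    exact onb_diag_norm_le e _ (fun i => chebU ℝ m (x i)) (hBe m)
      (chebU ℝ m ω0) (chebU_nonneg hω0 m) (fun i => chebU_abs_le hω0 (hxabs i) m) v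
  set S := (Finset.Icc 1 k).sup' (Finset.nonempty_Icc.mpr hk1) (fun j => ‖r j‖) with hS
  have hSle : ∀ j ∈ Finset.Icc 1 k, ‖r j‖ ≤ S := by
    intro j hj
    rw [hS]
    exact Finset.le_sup' (fun j => ‖r j‖) hj
  have hS0 : 0 ≤ S := le_trans (norm_nonneg (r k))
    (hSle k (Finset.mem_Icc.mpr ⟨hk1, le_rfl⟩))
  rw [hd k hk1 hks]
  calc ‖∑ j ∈ Finset.Icc 1 k, (b k / b j * w j) • Matrix.toEuclideanLin
          (chebU (Matrix (Fin n) (Fin n) ℝ) (k - j) M) (r j)‖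
      ≤ ∑ j ∈ Finset.Icc 1 k, ‖(b k / b j * w j) • Matrix.toEuclideanLin
          (chebU (Matrix (Fin n) (Fin n) ℝ) (k - j) M) (r j)‖ := norm_sum_le _ _
    _ ≤ ∑ j ∈ Finset.Icc 1 k, b k / b j * w j * chebU ℝ (k - j) ω0 * S := by
        refine Finset.sum_le_sum fun j hj => ?_
        obtain ⟨hj1, hj2⟩ := Finset.mem_Icc.mp hj
        have hbj := hb j (le_trans hj2 hks)
        have hbk := hb k hks
        have hwj := hw j hj1 (le_trans hj2 hks)
        have hcoeff : 0 ≤ b k / b j * w j := by positivity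
        rw [norm_smul, Real.norm_eq_abs, abs_of_nonneg hcoeff]
        calc b k / b j * w j * ‖Matrix.toEuclideanLin
              (chebU (Matrix (Fin n) (Fin n) ℝ) (k - j) M) (r j)‖
            ≤ b k / b j * w j * (chebU ℝ (k - j) ω0 * ‖r j‖) := by
              gcongr
              exact hnorm (k - j) (r j)
          _ ≤ b k / b j * w j * (chebU ℝ (k - j) ω0 * S) := by
              gcongr
              · exact chebU_nonneg hω0 _
              · exact hSle j hj
          _ = b k / b j * w j * chebU ℝ (k - j) ω0 * S := by ring
    _ = (∑ j ∈ Finset.Icc 1 k, b k / b j * w j * chebU ℝ (k - j) ω0) * S :=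
        (Finset.sum_mul _ _ _).symm
end
end

section
/- Let s ≥ 1, let ϑ ≥ 0, and set ω0 = 1 + ϑ/s², ω1 = T_s(ω0)/T_s′(ω0), b_j = 1/T_j(ω0) for 0 ≤ j ≤ s (first-order RKC1 coefficients, so a_j = 0 and γ_j = 0), with μ_j, ν_j, κ_j the RKC coefficients. Let f : ℝⁿ → ℝⁿ, ŷ ∈ ℝⁿ, Δt > 0, K ≥ 0, and let Δ̂f_1, …, Δ̂f_{s−1} ∈ ℝⁿ satisfy ‖Δ̂f_j‖₂ ≤ K for all j. Define d̂_0 = 0, d̂_1 = μ_1 Δt f(ŷ), d̂_j = ν_j d̂_{j−1} + κ_j d̂_{j−2} + μ_j Δt (f(ŷ) + Δ̂f_{j−1}) for 2 ≤ j ≤ s, and ŷ⁺ = ŷ + d̂_s. Then ‖ŷ⁺ − ŷ − Δt f(ŷ)‖₂ ≤ K Δt. -/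
noncomputable section

/-!
Multiplying the stage recursion by `T_j(ω0)` turns it into the inhomogeneous Chebyshev recurrence
`e_{j+2} = 2 ω0 e_{j+1} - e_j + r_j` for `e_j = T_j(ω0) d̂_j`. Differentiating the recurrence of
`T_j` shows that `ω1 Δt T_j'(ω0) f(ŷ)` solves it with the unperturbed forcing, so the defect
`g_j = T_j d̂_j - ω1 Δt T_j'(ω0) f(ŷ)` is driven by the perturbations alone. By the discrete
Duhamel formula its solution is a combination of the forcings with the nonnegative weights
`U_k(ω0)` (`ω0 ≥ 1`), hence `‖g_s‖` is bounded by the scalar solution driven by `K`, namely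
`ω1 Δt K T_s'(ω0)`. Dividing by `T_s(ω0) = ω1 T_s'(ω0)` gives the bound `K Δt`.
-/

open Finset

def ChebRecurrence {R V : Type*} [Ring R] [AddCommGroup V] [Module R V]
    (x : R) (N : ℕ) (e r : ℕ → V) : Prop :=
  ∀ j, j + 2 ≤ N → e (j + 2) = (2 * x) • e (j + 1) - e j + r j

namespace ChebRecurrence

variable {R V : Type*} [Ring R] [AddCommGroup V] [Module R V] {x : R} {N : ℕ}

theorem sub {e r e' r' : ℕ → V} (h : ChebRecurrence x N e r) (h' : ChebRecurrence x N e' r') :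
    ChebRecurrence x N (e - e') (r - r') := fun j hj => by
  simp only [Pi.sub_apply, h j hj, h' j hj, smul_sub]
  abel

theorem smul_const {a σ : ℕ → R} (h : ChebRecurrence x N a σ) (v : V) :
    ChebRecurrence x N (fun j => a j • v) (fun j => σ j • v) := fun j hj => by
  simp only [h j hj, sub_smul, add_smul, mul_smul, smul_eq_mul]

/-- Discrete Duhamel formula: `U_k(x)` is the response at step `k + 1` to a unit impulse. -/
theorem eq_chebU_smul_add_sum {e r : ℕ → V} (h : ChebRecurrence x N e r) (h0 : e 0 = 0) :
    ∀ j, j + 1 ≤ N →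
      e (j + 1) = chebU R j x • e 1 + ∑ m ∈ range j, chebU R (j - 1 - m) x • r m := by
  intro j
  induction j using Nat.strong_induction_on with
  | _ j ih =>
    intro hj
    match j with
    | 0 => simp [chebU]
    | 1 => simp [chebU, h 0 hj, h0]
    | k + 2 =>
      have hU : ∀ m ∈ range k, chebU R (k + 2 - 1 - m) x • r m
          = (2 * x) • (chebU R (k + 1 - 1 - m) x • r m) - chebU R (k - 1 - m) x • r m := by
        intro m hm
        rw [mem_range] at hm
        obtain ⟨i, rfl⟩ : ∃ i, k = m + 1 + i := ⟨k - m - 1, by omega⟩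
        rw [show m + 1 + i + 2 - 1 - m = i + 2 by omega,
          show m + 1 + i + 1 - 1 - m = i + 1 by omega, show m + 1 + i - 1 - m = i by omega,
          ← mul_smul, ← sub_smul]
        rfl
      rw [h (k + 1) hj, ih (k + 1) (by omega) (by omega), ih k (by omega) (by omega),
        sum_range_succ _ (k + 1), sum_range_succ _ k, sum_range_succ _ k, sum_congr rfl hU,
        sum_sub_distrib, ← smul_sum, show k + 2 - 1 - k = 1 by omega,
        show k + 2 - 1 - (k + 1) = 0 by omega, show k + 1 - 1 - k = 0 by omega,
        show chebU R (k + 2) x = 2 * x * chebU R (k + 1) x - chebU R k x from rfl]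
      simp only [chebU, one_smul, mul_smul, sub_smul, smul_add]
      abel

end ChebRecurrence

theorem monotone_of_chebyshev_recurrence {R : Type*} [CommRing R] [LinearOrder R]
    [IsStrictOrderedRing R] {x : R} (hx : 1 ≤ x) {a r : ℕ → R}
    (ha : ∀ j, a (j + 2) = 2 * x * a (j + 1) - a j + r j) (hr : ∀ j, 0 ≤ r j)
    (h0 : 0 ≤ a 0) (h01 : a 0 ≤ a 1) : Monotone a := by
  have key : ∀ j, 0 ≤ a j ∧ a j ≤ a (j + 1) := by
    intro j
    induction j with
    | zero => exact ⟨h0, h01⟩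
    | succ k ih =>
      refine ⟨ih.1.trans ih.2, ?_⟩
      rw [ha k]
      nlinarith [ih.1.trans ih.2, hr k]
  exact monotone_nat_of_le_succ fun j => (key j).2

theorem one_le_chebT {R : Type*} [CommRing R] [LinearOrder R] [IsStrictOrderedRing R]
    {x : R} (hx : 1 ≤ x) (j : ℕ) : 1 ≤ chebT R j x :=
  monotone_of_chebyshev_recurrence hx (a := fun j => chebT R j x) (r := 0)
    (fun j => by simp [chebT]) (fun _ => le_rfl) zero_le_one (by simpa [chebT] using hx) j.zero_le

theorem one_le_chebU {R : Type*} [CommRing R] [LinearOrder R] [IsStrictOrderedRing R]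
    {x : R} (hx : 1 ≤ x) (j : ℕ) : 1 ≤ chebU R j x :=
  monotone_of_chebyshev_recurrence hx (a := fun j => chebU R j x) (r := 0)
    (fun j => by simp [chebU]) (fun _ => le_rfl) zero_le_one (by simp [chebU]; linarith) j.zero_le

section Derivative

variable {𝕜 : Type*} [NontriviallyNormedField 𝕜]

theorem differentiable_chebT : ∀ n, Differentiable 𝕜 (chebT 𝕜 n)
  | 0 => differentiable_const 1
  | 1 => differentiable_id
  | n + 2 => ((differentiable_id.const_mul 2).mul (differentiable_chebT (n + 1))).sub
      (differentiable_chebT n)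

@[simp]
theorem deriv_chebT_zero (x : 𝕜) : deriv (chebT 𝕜 0) x = 0 :=
  deriv_const x 1

@[simp]
theorem deriv_chebT_one (x : 𝕜) : deriv (chebT 𝕜 1) x = 1 :=
  deriv_id x

theorem deriv_chebT_add_two (n : ℕ) (x : 𝕜) :
    deriv (chebT 𝕜 (n + 2)) x
      = 2 * x * deriv (chebT 𝕜 (n + 1)) x - deriv (chebT 𝕜 n) x + 2 * chebT 𝕜 (n + 1) x := by
  have h := (((hasDerivAt_id x).const_mul 2).mul
    (differentiable_chebT (n + 1) x).hasDerivAt).sub (differentiable_chebT n x).hasDerivAt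
  rw [show chebT 𝕜 (n + 2) = (fun y => 2 * id y) * chebT 𝕜 (n + 1) - chebT 𝕜 n from rfl,
    h.deriv]
  simp only [id, mul_one]
  ring

theorem chebRecurrence_deriv_chebT (x : 𝕜) (N : ℕ) :
    ChebRecurrence x N (fun j => deriv (chebT 𝕜 j) x) (fun j => 2 * chebT 𝕜 (j + 1) x) :=
  fun j _ => deriv_chebT_add_two j x

end Derivative

theorem one_le_deriv_chebT {x : ℝ} (hx : 1 ≤ x) {n : ℕ} (hn : 1 ≤ n) :
    1 ≤ deriv (chebT ℝ n) x := by
  have hmono := monotone_of_chebyshev_recurrence hx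
    (a := fun j => deriv (chebT ℝ j) x) (r := fun j => 2 * chebT ℝ (j + 1) x)
    (deriv_chebT_add_two · x)
    (fun j => by linarith [one_le_chebT hx (j + 1)]) (by simp) (by simp)
  simpa using hmono hn

theorem ChebRecurrence.norm_le {V : Type*} [NormedAddCommGroup V] [NormedSpace ℝ V]
    {x : ℝ} (hx : 1 ≤ x) {N : ℕ} {g ρ : ℕ → V} {a σ : ℕ → ℝ}
    (hg : ChebRecurrence x N g ρ) (ha : ChebRecurrence x N a σ) (hg0 : g 0 = 0) (ha0 : a 0 = 0)
    (h1 : ‖g 1‖ ≤ a 1) (hρσ : ∀ j, j + 2 ≤ N → ‖ρ j‖ ≤ σ j) : ‖g N‖ ≤ a N := by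
  obtain _ | j := N
  · simp [hg0, ha0]
  have hU (k : ℕ) : 0 ≤ chebU ℝ k x := zero_le_one.trans (one_le_chebU hx k)
  rw [hg.eq_chebU_smul_add_sum hg0 j le_rfl, ha.eq_chebU_smul_add_sum ha0 j le_rfl]
  refine (norm_add_le _ _).trans (add_le_add ?_ ((norm_sum_le _ _).trans (sum_le_sum ?_)))
  · rw [norm_smul, Real.norm_of_nonneg (hU j), smul_eq_mul]
    exact mul_le_mul_of_nonneg_left h1 (hU j)
  · intro m hm
    rw [norm_smul, Real.norm_of_nonneg (hU _), smul_eq_mul]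
    exact mul_le_mul_of_nonneg_left (hρσ m (by simp at hm; omega)) (hU _)

theorem rkc1_scaled_stages_chebRecurrence {V : Type*} [AddCommGroup V] [Module ℝ V]
    {s : ℕ} {ω0 ω1 Δt : ℝ} {b μ ν κ : ℕ → ℝ} {F : V} {Δf d : ℕ → V}
    (hT : ∀ j, chebT ℝ j ω0 ≠ 0)
    (hb : ∀ j, j ≤ s → b j = 1 / chebT ℝ j ω0)
    (hμ : ∀ j, 2 ≤ j → j ≤ s → μ j = 2 * ω1 * b j / b (j - 1))
    (hν : ∀ j, 2 ≤ j → j ≤ s → ν j = 2 * ω0 * b j / b (j - 1))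
    (hκ : ∀ j, 2 ≤ j → j ≤ s → κ j = -(b j / b (j - 2)))
    (hd : ∀ j, 2 ≤ j → j ≤ s →
      d j = ν j • d (j - 1) + κ j • d (j - 2) + (μ j * Δt) • (F + Δf (j - 1))) :
    ChebRecurrence ω0 s (fun j => chebT ℝ j ω0 • d j)
      (fun j => (2 * ω1 * Δt * chebT ℝ (j + 1) ω0) • (F + Δf (j + 1))) := by
  intro j hj
  have h := hd (j + 2) (by omega) hj
  simp only [show j + 2 - 1 = j + 1 by omega, Nat.add_sub_cancel] at h
  show chebT ℝ (j + 2) ω0 • d (j + 2) = _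
  rw [h, hν _ (by omega) hj, hμ _ (by omega) hj, hκ _ (by omega) hj,
    show j + 2 - 1 = j + 1 by omega, Nat.add_sub_cancel,
    hb _ hj, hb _ (by omega), hb _ (by omega)]
  have := hT j; have := hT (j + 1); have := hT (j + 2)
  match_scalars <;> field_simp

theorem rkc1_defect_chebRecurrence {V : Type*} [AddCommGroup V] [Module ℝ V]
    {s : ℕ} {ω0 ω1 Δt : ℝ} {b μ ν κ : ℕ → ℝ} {F : V} {Δf d : ℕ → V}
    (hT : ∀ j, chebT ℝ j ω0 ≠ 0)
    (hb : ∀ j, j ≤ s → b j = 1 / chebT ℝ j ω0)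
    (hμ : ∀ j, 2 ≤ j → j ≤ s → μ j = 2 * ω1 * b j / b (j - 1))
    (hν : ∀ j, 2 ≤ j → j ≤ s → ν j = 2 * ω0 * b j / b (j - 1))
    (hκ : ∀ j, 2 ≤ j → j ≤ s → κ j = -(b j / b (j - 2)))
    (hd : ∀ j, 2 ≤ j → j ≤ s →
      d j = ν j • d (j - 1) + κ j • d (j - 2) + (μ j * Δt) • (F + Δf (j - 1))) :
    ChebRecurrence ω0 s (fun j => chebT ℝ j ω0 • d j - deriv (chebT ℝ j) ω0 • ((ω1 * Δt) • F))
      (fun j => (2 * ω1 * Δt * chebT ℝ (j + 1) ω0) • Δf (j + 1)) := by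
  convert (rkc1_scaled_stages_chebRecurrence hT hb hμ hν hκ hd).sub
    ((chebRecurrence_deriv_chebT ω0 s).smul_const ((ω1 * Δt) • F)) using 1 <;> funext j
  · rfl
  · simp only [Pi.sub_apply]
    module

theorem rkc1_defect_norm_le {V : Type*} [NormedAddCommGroup V] [NormedSpace ℝ V]
    {s : ℕ} {ω0 ω1 Δt K : ℝ} {b μ ν κ : ℕ → ℝ} {F : V} {Δf d : ℕ → V}
    (hs : 1 ≤ s) (hx : 1 ≤ ω0) (hω1 : 0 ≤ ω1) (hΔt : 0 ≤ Δt) (hK : 0 ≤ K)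
    (hb : ∀ j, j ≤ s → b j = 1 / chebT ℝ j ω0)
    (hμ1 : μ 1 = b 1 * ω1)
    (hμ : ∀ j, 2 ≤ j → j ≤ s → μ j = 2 * ω1 * b j / b (j - 1))
    (hν : ∀ j, 2 ≤ j → j ≤ s → ν j = 2 * ω0 * b j / b (j - 1))
    (hκ : ∀ j, 2 ≤ j → j ≤ s → κ j = -(b j / b (j - 2)))
    (hΔf : ∀ j, 1 ≤ j → j ≤ s - 1 → ‖Δf j‖ ≤ K)
    (hd0 : d 0 = 0) (hd1 : d 1 = (μ 1 * Δt) • F)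
    (hd : ∀ j, 2 ≤ j → j ≤ s →
      d j = ν j • d (j - 1) + κ j • d (j - 2) + (μ j * Δt) • (F + Δf (j - 1))) :
    ‖chebT ℝ s ω0 • d s - deriv (chebT ℝ s) ω0 • ((ω1 * Δt) • F)‖
      ≤ deriv (chebT ℝ s) ω0 * (ω1 * Δt * K) := by
  have hT (j : ℕ) : 0 < chebT ℝ j ω0 := zero_lt_one.trans_le (one_le_chebT hx j)
  refine (rkc1_defect_chebRecurrence (fun j => (hT j).ne') hb hμ hν hκ hd).norm_le hx
    ((chebRecurrence_deriv_chebT ω0 s).smul_const (ω1 * Δt * K)) (by simp [hd0]) (by simp) ?_ ?_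
  · have h1 : chebT ℝ 1 ω0 • d 1 - deriv (chebT ℝ 1) ω0 • ((ω1 * Δt) • F) = 0 := by
      rw [hd1, hμ1, hb 1 hs, deriv_chebT_one, show chebT ℝ 1 ω0 = ω0 from rfl]
      have : ω0 ≠ 0 := by linarith
      match_scalars
      field_simp
      ring
    rw [h1, norm_zero, deriv_chebT_one, smul_eq_mul, one_mul]
    positivity
  · intro j hj
    have hc : 0 ≤ 2 * ω1 * Δt * chebT ℝ (j + 1) ω0 := by
      have := hT (j + 1)
      positivity
    rw [norm_smul, Real.norm_of_nonneg hc, smul_eq_mul]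
    calc _ ≤ 2 * ω1 * Δt * chebT ℝ (j + 1) ω0 * K :=
          mul_le_mul_of_nonneg_left (hΔf (j + 1) (by omega) (by omega)) hc
      _ = _ := by ring

/-- one step of the mixed-precision RKC1 scheme with perturbations
`Δ̂f_j` bounded by `K` satisfies `‖ŷ⁺ − ŷ − Δt f(ŷ)‖₂ ≤ K Δt`. -/
theorem mixed_precision_rkc1_consistency
    {n : ℕ} (s : ℕ) (hs : 1 ≤ s) (ϑ : ℝ) (hϑ : 0 ≤ ϑ)
    (ω0 ω1 : ℝ) (b μ ν κ : ℕ → ℝ)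
    (hω0 : ω0 = 1 + ϑ / (s : ℝ) ^ 2)
    (hω1 : ω1 = chebT ℝ s ω0 / deriv (fun x => chebT ℝ s x) ω0)
    (hb : ∀ j, j ≤ s → b j = 1 / chebT ℝ j ω0)
    (hμ1 : μ 1 = b 1 * ω1)
    (hμ : ∀ j, 2 ≤ j → j ≤ s → μ j = 2 * ω1 * b j / b (j - 1))
    (hν : ∀ j, 2 ≤ j → j ≤ s → ν j = 2 * ω0 * b j / b (j - 1))
    (hκ : ∀ j, 2 ≤ j → j ≤ s → κ j = -(b j / b (j - 2)))
    (f : EuclideanSpace ℝ (Fin n) → EuclideanSpace ℝ (Fin n))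
    (yhat : EuclideanSpace ℝ (Fin n)) (Δt : ℝ) (hΔt : 0 < Δt)
    (K : ℝ) (hK : 0 ≤ K)
    (Δf : ℕ → EuclideanSpace ℝ (Fin n))
    (hΔf : ∀ j, 1 ≤ j → j ≤ s - 1 → ‖Δf j‖ ≤ K)
    (d : ℕ → EuclideanSpace ℝ (Fin n))
    (hd0 : d 0 = 0) (hd1 : d 1 = (μ 1 * Δt) • f yhat)
    (hd : ∀ j, 2 ≤ j → j ≤ s →
      d j = ν j • d (j - 1) + κ j • d (j - 2) + (μ j * Δt) • (f yhat + Δf (j - 1)))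
    (yhat' : EuclideanSpace ℝ (Fin n)) (hyhat' : yhat' = yhat + d s) :
    ‖yhat' - yhat - Δt • f yhat‖ ≤ K * Δt := by
  have hx : 1 ≤ ω0 := by
    rw [hω0]
    linarith [div_nonneg hϑ (sq_nonneg (s : ℝ))]
  have hT : 0 < chebT ℝ s ω0 := zero_lt_one.trans_le (one_le_chebT hx s)
  have hD : 0 < deriv (chebT ℝ s) ω0 := zero_lt_one.trans_le (one_le_deriv_chebT hx hs)
  have hω1_pos : 0 < ω1 := hω1 ▸ div_pos hT hD
  have hω1T : ω1 * deriv (chebT ℝ s) ω0 = chebT ℝ s ω0 := by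
    rw [hω1]
    field_simp
  have hdefect := rkc1_defect_norm_le hs hx hω1_pos.le hΔt.le hK hb hμ1 hμ hν hκ hΔf hd0 hd1 hd
  have hstep : yhat' - yhat - Δt • f yhat = (chebT ℝ s ω0)⁻¹ •
      (chebT ℝ s ω0 • d s - deriv (chebT ℝ s) ω0 • ((ω1 * Δt) • f yhat)) := by
    rw [smul_smul, ← mul_assoc, mul_comm _ ω1, hω1T, mul_smul, ← smul_sub,
      inv_smul_smul₀ hT.ne', hyhat']
    abel
  rw [hstep, norm_smul, Real.norm_of_nonneg (inv_nonneg.2 hT.le)]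
  calc (chebT ℝ s ω0)⁻¹ * ‖_‖ ≤ (chebT ℝ s ω0)⁻¹ * (deriv (chebT ℝ s) ω0 * (ω1 * Δt * K)) :=
        mul_le_mul_of_nonneg_left hdefect (inv_nonneg.2 hT.le)
    _ = K * Δt := by
        rw [← hω1T]
        field_simp
end
end

section
/- Let s ≥ 2, ϑ ≥ 0, and set ω0 = 1 + ϑ/s², ω1 = T_s′(ω0)/T_s″(ω0), b_j = T_j″(ω0)/T_j′(ω0)² for 2 ≤ j ≤ s and b_0 = b_1 = b_2 (second-order RKC2 coefficients), a_j = 1 − b_j T_j(ω0), with μ_j, ν_j, κ_j, γ_j the RKC coefficients, and let c_0 = 0, c_1 = μ_1, c_j = ν_j c_{j−1} + κ_j c_{j−2} + μ_j + γ_j. Let f : ℝⁿ → ℝⁿ be differentiable at ŷ ∈ ℝⁿ with Jacobian f′(ŷ), let Δt > 0, K ≥ 0, and suppose Δ̂f_1, …, Δ̂f_{s−1} ∈ ℝⁿ satisfy Δ̂f_j = c_j Δt f′(ŷ) f(ŷ) + r_j with ‖r_j‖₂ ≤ K for all j. Define d̂_0 = 0, d̂_1 = μ_1 Δt f(ŷ),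 d̂_j = ν_j d̂_{j−1} + κ_j d̂_{j−2} + μ_j Δt (f(ŷ) + Δ̂f_{j−1}) + γ_j Δt f(ŷ) for 2 ≤ j ≤ s, and ŷ⁺ = ŷ + d̂_s. Then ‖ŷ⁺ − ŷ − Δt f(ŷ) − (Δt²/2) f′(ŷ) f(ŷ)‖₂ ≤ K Δt · Σ_{j=2}^{s} (b_s/b_j) U_{s−j}(ω0) μ_j. -/
/-!
Dividing the RKC recurrence `d j = ν j d (j - 1) + κ j d (j - 2) + e j` by `b j` turns it into
the Chebyshev recurrence `D j = 2 ω₀ D (j - 1) - D (j - 2) + F j`, whose fundamental solution is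
`U`. Without the perturbations `r`, the stages are `c j Δt f(ŷ) + q j Δt² f′(ŷ) f(ŷ)` with
`c j = ω₁ b j T′_j(ω₀)` and `q j = ω₁² b j T″_j(ω₀) / 2`, because `T′` and `T″` satisfy the
differentiated recurrence; the choice of `ω₁` and `b s` makes `c s = 1` and `q s = 1 / 2`.
The perturbation `r (j - 1)` enters stage `j` as the forcing `μ j Δt r (j - 1)`, so it reaches `ŷ⁺`
with the weight `(b s / b j) U_{s-j}(ω₀) μ j Δt`, which is nonnegative because `ω₀ ≥ 1`.
-/

noncomputable section

open Finset

def chebTDeriv (R : Type*) [Ring R] : ℕ → R → R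
  | 0, _ => 0
  | 1, _ => 1
  | n + 2, x => 2 * chebT R (n + 1) x + 2 * x * chebTDeriv R (n + 1) x - chebTDeriv R n x

def chebTDeriv2 (R : Type*) [Ring R] : ℕ → R → R
  | 0, _ => 0
  | 1, _ => 0
  | n + 2, x => 4 * chebTDeriv R (n + 1) x + 2 * x * chebTDeriv2 R (n + 1) x - chebTDeriv2 R n x

section Derivatives

variable {𝕜 : Type*} [NontriviallyNormedField 𝕜]

theorem hasDerivAt_chebT : ∀ (n : ℕ) (x : 𝕜), HasDerivAt (chebT 𝕜 n) (chebTDeriv 𝕜 n x) x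
  | 0, x => by simpa [chebT, chebTDeriv] using hasDerivAt_const x (1 : 𝕜)
  | 1, x => hasDerivAt_id' x
  | n + 2, x =>
    ((((hasDerivAt_id' x).const_mul 2).mul (hasDerivAt_chebT (n + 1) x)).sub
      (hasDerivAt_chebT n x)).congr_deriv (by simp only [chebTDeriv]; ring)

theorem hasDerivAt_chebTDeriv : ∀ (n : ℕ) (x : 𝕜),
    HasDerivAt (chebTDeriv 𝕜 n) (chebTDeriv2 𝕜 n x) x
  | 0, x => by simpa [chebTDeriv, chebTDeriv2] using hasDerivAt_const x (0 : 𝕜)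
  | 1, x => by simpa [chebTDeriv, chebTDeriv2] using hasDerivAt_const x (1 : 𝕜)
  | n + 2, x =>
    ((((hasDerivAt_chebT (n + 1) x).const_mul 2).add
      (((hasDerivAt_id' x).const_mul 2).mul (hasDerivAt_chebTDeriv (n + 1) x))).sub
      (hasDerivAt_chebTDeriv n x)).congr_deriv (by simp only [chebTDeriv2]; ring)

theorem deriv_chebT (n : ℕ) : deriv (chebT 𝕜 n) = chebTDeriv 𝕜 n :=
  funext fun x => (hasDerivAt_chebT n x).deriv

theorem deriv_chebTDeriv (n : ℕ) : deriv (chebTDeriv 𝕜 n) = chebTDeriv2 𝕜 n :=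
  funext fun x => (hasDerivAt_chebTDeriv n x).deriv

end Derivatives

section Recurrences

variable {R : Type*} [Ring R] {j : ℕ}

theorem chebU_of_two_le (hj : 2 ≤ j) (x : R) :
    chebU R j x = 2 * x * chebU R (j - 1) x - chebU R (j - 2) x := by
  obtain ⟨n, rfl⟩ := Nat.exists_eq_add_of_le' hj
  rfl

theorem chebTDeriv_of_two_le (hj : 2 ≤ j) (x : R) :
    chebTDeriv R j x = 2 * chebT R (j - 1) x + 2 * x * chebTDeriv R (j - 1) x
      - chebTDeriv R (j - 2) x := by
  obtain ⟨n, rfl⟩ := Nat.exists_eq_add_of_le' hj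
  rfl

theorem chebTDeriv2_of_two_le (hj : 2 ≤ j) (x : R) :
    chebTDeriv2 R j x = 4 * chebTDeriv R (j - 1) x + 2 * x * chebTDeriv2 R (j - 1) x
      - chebTDeriv2 R (j - 2) x := by
  obtain ⟨n, rfl⟩ := Nat.exists_eq_add_of_le' hj
  rfl

end Recurrences

section Positivity

variable {x : ℝ}

/-- At `x ≥ 1`, `a (n + 2) - a (n + 1) ≥ 2 (x - 1) a (n + 1) + (a (n + 1) - a n)`. -/
theorem monotone_of_chebyshev_recurrence_s10 (hx : 1 ≤ x) {a : ℕ → ℝ} (h0 : 0 ≤ a 0)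
    (h01 : a 0 ≤ a 1) (h : ∀ n, 2 * x * a (n + 1) - a n ≤ a (n + 2)) : Monotone a := by
  have key : ∀ n, 0 ≤ a n ∧ a n ≤ a (n + 1) := by
    intro n
    induction n with
    | zero => exact ⟨h0, h01⟩
    | succ n ih =>
      have hpos : 0 ≤ a (n + 1) := ih.1.trans ih.2
      exact ⟨hpos, by nlinarith [h n, mul_nonneg (sub_nonneg.2 hx) hpos]⟩
  exact monotone_nat_of_le_succ fun n => (key n).2

theorem one_le_chebT_s10 (hx : 1 ≤ x) (n : ℕ) : 1 ≤ chebT ℝ n x :=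
  monotone_of_chebyshev_recurrence_s10 hx (a := fun n => chebT ℝ n x) (by simp [chebT])
    (by simpa [chebT] using hx) (fun n => by simp [chebT]) (Nat.zero_le n)

theorem one_le_chebU_s10 (hx : 1 ≤ x) (n : ℕ) : 1 ≤ chebU ℝ n x :=
  monotone_of_chebyshev_recurrence_s10 hx (a := fun n => chebU ℝ n x) (by simp [chebU])
    (by simp [chebU]; linarith) (fun n => by simp [chebU]) (Nat.zero_le n)

theorem one_le_chebTDeriv (hx : 1 ≤ x) {n : ℕ} (hn : 1 ≤ n) : 1 ≤ chebTDeriv ℝ n x :=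
  monotone_of_chebyshev_recurrence_s10 hx (a := fun n => chebTDeriv ℝ n x) (by simp [chebTDeriv])
    (by simp [chebTDeriv]) (fun n => by simp [chebTDeriv]; linarith [one_le_chebT_s10 hx (n + 1)]) hn

theorem four_le_chebTDeriv2 (hx : 1 ≤ x) {n : ℕ} (hn : 2 ≤ n) : 4 ≤ chebTDeriv2 ℝ n x := by
  have hmono : Monotone fun n => chebTDeriv2 ℝ n x :=
    monotone_of_chebyshev_recurrence_s10 hx (by simp [chebTDeriv2]) (by simp [chebTDeriv2])
      fun n => by simp [chebTDeriv2]; linarith [one_le_chebTDeriv hx n.succ_pos]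
  simpa [chebTDeriv2, chebTDeriv] using hmono hn

end Positivity

theorem eq_of_three_term_recurrence {α : Type*} (Φ : ℕ → α → α → α) {s : ℕ} {u v : ℕ → α}
    (h0 : u 0 = v 0) (h1 : u 1 = v 1)
    (hu : ∀ j, 2 ≤ j → j ≤ s → u j = Φ j (u (j - 1)) (u (j - 2)))
    (hv : ∀ j, 2 ≤ j → j ≤ s → v j = Φ j (v (j - 1)) (v (j - 2))) :
    ∀ j ≤ s, u j = v j := by
  intro j
  induction j using Nat.strong_induction_on with
  | _ j ih =>
    intro hj
    match j with
    | 0 => exact h0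
    | 1 => exact h1
    | m + 2 =>
      rw [hu _ (by omega) hj, hv _ (by omega) hj, ih (m + 2 - 1) (by omega) (by omega),
        ih (m + 2 - 2) (by omega) (by omega)]

theorem eq_sum_chebU_smul_of_recurrence {R M : Type*} [CommRing R] [AddCommGroup M] [Module R M]
    {x : R} {s : ℕ} {D F : ℕ → M} (h0 : D 0 = 0)
    (h1 : D 1 = 0) (h : ∀ j, 2 ≤ j → j ≤ s → D j = (2 * x) • D (j - 1) - D (j - 2) + F j) :
    ∀ j ≤ s, D j = ∑ k ∈ Icc 2 j, chebU R (j - k) x • F k := by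
  intro j
  induction j using Nat.strong_induction_on with
  | _ j ih =>
    intro hj
    match j with
    | 0 => simpa using h0
    | 1 => simpa using h1
    | 2 => simp [h 2 le_rfl hj, h0, h1, chebU]
    | m + 3 =>
      have hU : ∑ k ∈ Icc 2 (m + 1), chebU R (m + 3 - k) x • F k
          = (2 * x) • ∑ k ∈ Icc 2 (m + 1), chebU R (m + 2 - k) x • F k
            - ∑ k ∈ Icc 2 (m + 1), chebU R (m + 1 - k) x • F k := by
        rw [smul_sum, ← sum_sub_distrib]
        refine sum_congr rfl fun k hk => ?_
        have hk := (mem_Icc.1 hk).2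
        rw [chebU_of_two_le (by omega), smul_smul, ← sub_smul,
          show m + 3 - k - 1 = m + 2 - k by omega, show m + 3 - k - 2 = m + 1 - k by omega]
      rw [h (m + 3) (by omega) hj, show m + 3 - 1 = m + 2 by omega, show m + 3 - 2 = m + 1 by omega,
        ih (m + 2) (by omega) (by omega), ih (m + 1) (by omega) (by omega),
        -- peel off `k = m + 2, m + 3` from the new sum and `k = m + 2` from that for `D (m + 2)`
        sum_Icc_succ_top (by omega : 2 ≤ m + 2 + 1) fun k => chebU R (m + 3 - k) x • F k,
        sum_Icc_succ_top (by omega : 2 ≤ m + 1 + 1), sum_Icc_succ_top (by omega : 2 ≤ m + 1 + 1),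
        hU]
      simp only [tsub_self, Nat.reduceSubDiff, add_tsub_cancel_left, chebU, one_smul]
      module

theorem eq_sum_smul_of_rkc_recurrence {K M : Type*} [Field K] [AddCommGroup M] [Module K M]
    {x : K} {s : ℕ} {b ν κ : ℕ → K} {d e : ℕ → M} (hb : ∀ j ≤ s, b j ≠ 0)
    (hν : ∀ j, 2 ≤ j → j ≤ s → ν j = 2 * x * b j / b (j - 1))
    (hκ : ∀ j, 2 ≤ j → j ≤ s → κ j = -(b j / b (j - 2))) (h0 : d 0 = 0) (h1 : d 1 = 0)
    (hd : ∀ j, 2 ≤ j → j ≤ s → d j = ν j • d (j - 1) + κ j • d (j - 2) + e j) :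
    ∀ j ≤ s, d j = ∑ k ∈ Icc 2 j, (b j / b k * chebU K (j - k) x) • e k := by
  have hD := eq_sum_chebU_smul_of_recurrence (x := x) (s := s) (D := fun j => (b j)⁻¹ • d j)
    (F := fun j => (b j)⁻¹ • e j) (by simp [h0]) (by simp [h1]) fun j hj hjs => by
      have hb0 := hb j hjs
      have hb1 := hb (j - 1) (by omega)
      have hb2 := hb (j - 2) (by omega)
      rw [hd j hj hjs, hν j hj hjs, hκ j hj hjs]
      match_scalars <;> field_simp
  intro j hj
  rw [← smul_inv_smul₀ (hb j hj) (d j), hD j hj, smul_sum]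
  refine sum_congr rfl fun k _ => ?_
  simp only [smul_smul]
  congr 1
  ring

theorem norm_sum_smul_le_of_nonneg {ι E : Type*} [SeminormedAddCommGroup E] [NormedSpace ℝ E]
    (S : Finset ι) {a : ι → ℝ} {v : ι → E} {K : ℝ} (ha : ∀ i ∈ S, 0 ≤ a i)
    (hv : ∀ i ∈ S, ‖v i‖ ≤ K) : ‖∑ i ∈ S, a i • v i‖ ≤ K * ∑ i ∈ S, a i := by
  rw [mul_sum]
  refine norm_sum_le_of_le S fun i hi => ?_
  rw [norm_smul, Real.norm_of_nonneg (ha i hi), mul_comm]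
  exact mul_le_mul_of_nonneg_right (hv i hi) (ha i hi)

section RKC2

variable {K : Type*} [Field K] {x ω1 : K} {b μ ν κ γ c : ℕ → K} {s j : ℕ}

theorem rkc2_first_order_step (hj : 2 ≤ j) (hb1 : b (j - 1) ≠ 0) (hb2 : b (j - 2) ≠ 0)
    (hμ : μ j = 2 * ω1 * b j / b (j - 1)) (hν : ν j = 2 * x * b j / b (j - 1))
    (hκ : κ j = -(b j / b (j - 2))) (hγ : γ j = -(μ j * (1 - b (j - 1) * chebT K (j - 1) x))) :
    ω1 * b j * chebTDeriv K j x = ν j * (ω1 * b (j - 1) * chebTDeriv K (j - 1) x)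
      + κ j * (ω1 * b (j - 2) * chebTDeriv K (j - 2) x) + μ j + γ j := by
  rw [hγ, hμ, hν, hκ, chebTDeriv_of_two_le hj]
  field_simp
  ring

theorem rkc2_second_order_step (hj : 2 ≤ j) (hb1 : b (j - 1) ≠ 0) (hb2 : b (j - 2) ≠ 0)
    (hμ : μ j = 2 * ω1 * b j / b (j - 1)) (hν : ν j = 2 * x * b j / b (j - 1))
    (hκ : κ j = -(b j / b (j - 2))) :
    ω1 ^ 2 * b j * chebTDeriv2 K j x / 2
      = ν j * (ω1 ^ 2 * b (j - 1) * chebTDeriv2 K (j - 1) x / 2)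
        + κ j * (ω1 ^ 2 * b (j - 2) * chebTDeriv2 K (j - 2) x / 2)
        + μ j * (ω1 * b (j - 1) * chebTDeriv K (j - 1) x) := by
  rw [hμ, hν, hκ, chebTDeriv2_of_two_le hj]
  field_simp
  ring

theorem rkc2_c_eq_mul_chebTDeriv (hb : ∀ j ≤ s, b j ≠ 0) (hμ1 : μ 1 = b 1 * ω1)
    (hμ : ∀ j, 2 ≤ j → j ≤ s → μ j = 2 * ω1 * b j / b (j - 1))
    (hν : ∀ j, 2 ≤ j → j ≤ s → ν j = 2 * x * b j / b (j - 1))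
    (hκ : ∀ j, 2 ≤ j → j ≤ s → κ j = -(b j / b (j - 2)))
    (hγ : ∀ j, 2 ≤ j → j ≤ s → γ j = -(μ j * (1 - b (j - 1) * chebT K (j - 1) x)))
    (hc0 : c 0 = 0) (hc1 : c 1 = μ 1)
    (hc : ∀ j, 2 ≤ j → j ≤ s → c j = ν j * c (j - 1) + κ j * c (j - 2) + μ j + γ j) :
    ∀ j ≤ s, c j = ω1 * b j * chebTDeriv K j x :=
  eq_of_three_term_recurrence (fun j p q => ν j * p + κ j * q + μ j + γ j)
    (by simp [hc0, chebTDeriv]) (by simp [hc1, hμ1, chebTDeriv, mul_comm]) hc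
    fun j hj hjs => rkc2_first_order_step hj (hb _ (by omega)) (hb _ (by omega)) (hμ j hj hjs)
      (hν j hj hjs) (hκ j hj hjs) (hγ j hj hjs)

theorem rkc2_stage_sub_eq_sum {M : Type*} [AddCommGroup M] [Module K M] {q : ℕ → K} {Δt : K}
    {F G : M} {Δf r d : ℕ → M} (hb : ∀ j ≤ s, b j ≠ 0)
    (hν : ∀ j, 2 ≤ j → j ≤ s → ν j = 2 * x * b j / b (j - 1))
    (hκ : ∀ j, 2 ≤ j → j ≤ s → κ j = -(b j / b (j - 2)))
    (hc0 : c 0 = 0) (hc1 : c 1 = μ 1)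
    (hc : ∀ j, 2 ≤ j → j ≤ s → c j = ν j * c (j - 1) + κ j * c (j - 2) + μ j + γ j)
    (hq0 : q 0 = 0) (hq1 : q 1 = 0)
    (hq : ∀ j, 2 ≤ j → j ≤ s → q j = ν j * q (j - 1) + κ j * q (j - 2) + μ j * c (j - 1))
    (hΔf : ∀ j, 1 ≤ j → j ≤ s - 1 → Δf j = (c j * Δt) • G + r j)
    (hd0 : d 0 = 0) (hd1 : d 1 = (μ 1 * Δt) • F)
    (hd : ∀ j, 2 ≤ j → j ≤ s →
      d j = ν j • d (j - 1) + κ j • d (j - 2) + (μ j * Δt) • (F + Δf (j - 1)) + (γ j * Δt) • F) :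
    ∀ j ≤ s, d j - (c j * Δt) • F - (q j * Δt ^ 2) • G
      = ∑ k ∈ Icc 2 j, (b j / b k * chebU K (j - k) x) • (μ k * Δt) • r (k - 1) :=
  eq_sum_smul_of_rkc_recurrence hb hν hκ (by simp [hd0, hc0, hq0]) (by simp [hd1, hc1, hq1])
    fun j hj hjs => by
      rw [hd j hj hjs, hc j hj hjs, hq j hj hjs, hΔf (j - 1) (by omega) (by omega)]
      module

theorem rkc2_defect_eq {M : Type*} [AddCommGroup M] [Module K M] {Δt : K} {F G : M}
    {Δf r d : ℕ → M} (hb : ∀ j ≤ s, b j ≠ 0)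
    (hω1 : ω1 = chebTDeriv K s x / chebTDeriv2 K s x)
    (hbs : b s = chebTDeriv2 K s x / chebTDeriv K s x ^ 2)
    (hT' : chebTDeriv K s x ≠ 0) (hT'' : chebTDeriv2 K s x ≠ 0) (hμ1 : μ 1 = b 1 * ω1)
    (hμ : ∀ j, 2 ≤ j → j ≤ s → μ j = 2 * ω1 * b j / b (j - 1))
    (hν : ∀ j, 2 ≤ j → j ≤ s → ν j = 2 * x * b j / b (j - 1))
    (hκ : ∀ j, 2 ≤ j → j ≤ s → κ j = -(b j / b (j - 2)))
    (hγ : ∀ j, 2 ≤ j → j ≤ s → γ j = -(μ j * (1 - b (j - 1) * chebT K (j - 1) x)))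
    (hc0 : c 0 = 0) (hc1 : c 1 = μ 1)
    (hc : ∀ j, 2 ≤ j → j ≤ s → c j = ν j * c (j - 1) + κ j * c (j - 2) + μ j + γ j)
    (hΔf : ∀ j, 1 ≤ j → j ≤ s - 1 → Δf j = (c j * Δt) • G + r j)
    (hd0 : d 0 = 0) (hd1 : d 1 = (μ 1 * Δt) • F)
    (hd : ∀ j, 2 ≤ j → j ≤ s →
      d j = ν j • d (j - 1) + κ j • d (j - 2) + (μ j * Δt) • (F + Δf (j - 1)) + (γ j * Δt) • F) :
    d s - Δt • F - (Δt ^ 2 / 2) • G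
      = ∑ k ∈ Icc 2 s, (Δt * (b s / b k * chebU K (s - k) x * μ k)) • r (k - 1) := by
  have hc_eq := rkc2_c_eq_mul_chebTDeriv hb hμ1 hμ hν hκ hγ hc0 hc1 hc
  have hcs : c s = 1 := by
    rw [hc_eq s le_rfl, hω1, hbs]
    field_simp
  have hqs : ω1 ^ 2 * b s * chebTDeriv2 K s x / 2 = 1 / 2 := by
    rw [hω1, hbs]
    field_simp
  have h := rkc2_stage_sub_eq_sum (q := fun j => ω1 ^ 2 * b j * chebTDeriv2 K j x / 2) hb hν hκ
    hc0 hc1 hc (by simp [chebTDeriv2]) (by simp [chebTDeriv2])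
    (fun j hj hjs => by
      rw [hc_eq (j - 1) (by omega)]
      exact rkc2_second_order_step hj (hb _ (by omega)) (hb _ (by omega)) (hμ j hj hjs)
        (hν j hj hjs) (hκ j hj hjs))
    hΔf hd0 hd1 hd s le_rfl
  rw [hcs, hqs, one_mul] at h
  rw [show Δt ^ 2 / 2 = 1 / 2 * Δt ^ 2 by ring, h]
  refine sum_congr rfl fun k _ => ?_
  rw [smul_smul]
  ring_nf

end RKC2

theorem rkc2_b_pos {x : ℝ} {s : ℕ} {b : ℕ → ℝ} (hx : 1 ≤ x) (hs : 2 ≤ s)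
    (hb : ∀ j, 2 ≤ j → j ≤ s → b j = chebTDeriv2 ℝ j x / chebTDeriv ℝ j x ^ 2)
    (hb0 : b 0 = b 2) (hb1 : b 1 = b 2) : ∀ j ≤ s, 0 < b j := by
  have hpos : ∀ j, 2 ≤ j → j ≤ s → 0 < b j := fun j hj hjs => by
    rw [hb j hj hjs]
    have := four_le_chebTDeriv2 hx hj
    have := one_le_chebTDeriv hx (n := j) (by omega)
    positivity
  intro j hj
  match j with
  | 0 => exact hb0 ▸ hpos 2 le_rfl hs
  | 1 => exact hb1 ▸ hpos 2 le_rfl hs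
  | j + 2 => exact hpos (j + 2) (by omega) hj

theorem rkc2_weight_nonneg {x ω1 : ℝ} {b μ : ℕ → ℝ} {s k : ℕ} (hx : 1 ≤ x) (hω1 : 0 < ω1)
    (hb : ∀ j ≤ s, 0 < b j) (hk : 2 ≤ k) (hks : k ≤ s) (hμ : μ k = 2 * ω1 * b k / b (k - 1)) :
    0 ≤ b s / b k * chebU ℝ (s - k) x * μ k := by
  have := hb s le_rfl
  have := hb k hks
  have := hb (k - 1) (by omega)
  have := one_le_chebU_s10 hx (s - k)
  rw [hμ]
  positivity

theorem mixed_precision_rkc2_consistency_general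
    {n : ℕ} (s : ℕ) (hs : 2 ≤ s) (ϑ : ℝ) (hϑ : 0 ≤ ϑ)
    (ω0 ω1 : ℝ) (b μ ν κ γ c : ℕ → ℝ)
    (hω0 : ω0 = 1 + ϑ / (s : ℝ) ^ 2)
    (hω1 : ω1 = deriv (fun x => chebT ℝ s x) ω0 / deriv (deriv (fun x => chebT ℝ s x)) ω0)
    (hb : ∀ j, 2 ≤ j → j ≤ s →
      b j = deriv (deriv (fun x => chebT ℝ j x)) ω0 / (deriv (fun x => chebT ℝ j x) ω0) ^ 2)
    (hb0 : b 0 = b 2) (hb1 : b 1 = b 2)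
    (hμ1 : μ 1 = b 1 * ω1)
    (hμ : ∀ j, 2 ≤ j → j ≤ s → μ j = 2 * ω1 * b j / b (j - 1))
    (hν : ∀ j, 2 ≤ j → j ≤ s → ν j = 2 * ω0 * b j / b (j - 1))
    (hκ : ∀ j, 2 ≤ j → j ≤ s → κ j = -(b j / b (j - 2)))
    (hγ : ∀ j, 2 ≤ j → j ≤ s → γ j = -(μ j * (1 - b (j - 1) * chebT ℝ (j - 1) ω0)))
    (hc0 : c 0 = 0) (hc1 : c 1 = μ 1)
    (hc : ∀ j, 2 ≤ j → j ≤ s → c j = ν j * c (j - 1) + κ j * c (j - 2) + μ j + γ j)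
    (f : EuclideanSpace ℝ (Fin n) → EuclideanSpace ℝ (Fin n))
    (yhat : EuclideanSpace ℝ (Fin n)) (Δt : ℝ) (hΔt : 0 < Δt)
    (f' : EuclideanSpace ℝ (Fin n) →L[ℝ] EuclideanSpace ℝ (Fin n))
    (K : ℝ)
    (Δf r : ℕ → EuclideanSpace ℝ (Fin n))
    (hΔf : ∀ j, 1 ≤ j → j ≤ s - 1 → Δf j = (c j * Δt) • f' (f yhat) + r j)
    (hr : ∀ j, 1 ≤ j → j ≤ s - 1 → ‖r j‖ ≤ K)
    (d : ℕ → EuclideanSpace ℝ (Fin n))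
    (hd0 : d 0 = 0) (hd1 : d 1 = (μ 1 * Δt) • f yhat)
    (hd : ∀ j, 2 ≤ j → j ≤ s →
      d j = ν j • d (j - 1) + κ j • d (j - 2) + (μ j * Δt) • (f yhat + Δf (j - 1))
        + (γ j * Δt) • f yhat)
    (yhat' : EuclideanSpace ℝ (Fin n)) (hyhat' : yhat' = yhat + d s) :
    ‖yhat' - yhat - Δt • f yhat - (Δt ^ 2 / 2) • f' (f yhat)‖ ≤
      K * Δt * ∑ j ∈ Finset.Icc 2 s, b s / b j * chebU ℝ (s - j) ω0 * μ j := by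
  have hx : 1 ≤ ω0 := by rw [hω0]; linarith [div_nonneg hϑ (sq_nonneg (s : ℝ))]
  simp only [deriv_chebT, deriv_chebTDeriv] at hω1 hb
  have hT' : 0 < chebTDeriv ℝ s ω0 := one_pos.trans_le (one_le_chebTDeriv hx (by omega))
  have hT'' : 0 < chebTDeriv2 ℝ s ω0 := by linarith [four_le_chebTDeriv2 hx hs]
  have hb_pos := rkc2_b_pos hx hs hb hb0 hb1
  have hω1_pos : 0 < ω1 := hω1 ▸ div_pos hT' hT''
  rw [hyhat', add_sub_cancel_left, rkc2_defect_eq (fun j hj => (hb_pos j hj).ne') hω1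
    (hb s hs le_rfl) hT'.ne' hT''.ne' hμ1 hμ hν hκ hγ hc0 hc1 hc hΔf hd0 hd1 hd, mul_assoc, mul_sum]
  refine norm_sum_smul_le_of_nonneg _ (fun k hk => ?_) fun k hk => ?_
  · obtain ⟨hk2, hks⟩ := mem_Icc.1 hk
    exact mul_nonneg hΔt.le (rkc2_weight_nonneg hx hω1_pos hb_pos hk2 hks (hμ k hk2 hks))
  · obtain ⟨hk2, hks⟩ := mem_Icc.1 hk
    exact hr (k - 1) (by omega) (by omega)

/-- one step of the mixed-precision RKC2 scheme, with
`Δ̂f_j = c_j Δt f′(ŷ) f(ŷ) + r_j` and `‖r_j‖₂ ≤ K`, satisfies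
`‖ŷ⁺ − ŷ − Δt f(ŷ) − (Δt²/2) f′(ŷ) f(ŷ)‖₂ ≤ K Δt Σ_{j=2}^s (b_s/b_j) U_{s−j}(ω0) μ_j`. -/
theorem mixed_precision_rkc2_consistency
    {n : ℕ} (s : ℕ) (hs : 2 ≤ s) (ϑ : ℝ) (hϑ : 0 ≤ ϑ)
    (ω0 ω1 : ℝ) (b μ ν κ γ c : ℕ → ℝ)
    (hω0 : ω0 = 1 + ϑ / (s : ℝ) ^ 2)
    (hω1 : ω1 = deriv (fun x => chebT ℝ s x) ω0 / deriv (deriv (fun x => chebT ℝ s x)) ω0)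
    (hb : ∀ j, 2 ≤ j → j ≤ s →
      b j = deriv (deriv (fun x => chebT ℝ j x)) ω0 / (deriv (fun x => chebT ℝ j x) ω0) ^ 2)
    (hb0 : b 0 = b 2) (hb1 : b 1 = b 2)
    (hμ1 : μ 1 = b 1 * ω1)
    (hμ : ∀ j, 2 ≤ j → j ≤ s → μ j = 2 * ω1 * b j / b (j - 1))
    (hν : ∀ j, 2 ≤ j → j ≤ s → ν j = 2 * ω0 * b j / b (j - 1))
    (hκ : ∀ j, 2 ≤ j → j ≤ s → κ j = -(b j / b (j - 2)))
    (hγ : ∀ j, 2 ≤ j → j ≤ s → γ j = -(μ j * (1 - b (j - 1) * chebT ℝ (j - 1) ω0)))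
    (hc0 : c 0 = 0) (hc1 : c 1 = μ 1)
    (hc : ∀ j, 2 ≤ j → j ≤ s → c j = ν j * c (j - 1) + κ j * c (j - 2) + μ j + γ j)
    (f : EuclideanSpace ℝ (Fin n) → EuclideanSpace ℝ (Fin n))
    (yhat : EuclideanSpace ℝ (Fin n)) (Δt : ℝ) (hΔt : 0 < Δt)
    (f' : EuclideanSpace ℝ (Fin n) →L[ℝ] EuclideanSpace ℝ (Fin n))
    (hf' : HasFDerivAt f f' yhat)
    (K : ℝ) (hK : 0 ≤ K)
    (Δf r : ℕ → EuclideanSpace ℝ (Fin n))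
    (hΔf : ∀ j, 1 ≤ j → j ≤ s - 1 → Δf j = (c j * Δt) • f' (f yhat) + r j)
    (hr : ∀ j, 1 ≤ j → j ≤ s - 1 → ‖r j‖ ≤ K)
    (d : ℕ → EuclideanSpace ℝ (Fin n))
    (hd0 : d 0 = 0) (hd1 : d 1 = (μ 1 * Δt) • f yhat)
    (hd : ∀ j, 2 ≤ j → j ≤ s →
      d j = ν j • d (j - 1) + κ j • d (j - 2) + (μ j * Δt) • (f yhat + Δf (j - 1))
        + (γ j * Δt) • f yhat)
    (yhat' : EuclideanSpace ℝ (Fin n)) (hyhat' : yhat' = yhat + d s) :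
    ‖yhat' - yhat - Δt • f yhat - (Δt ^ 2 / 2) • f' (f yhat)‖ ≤
      K * Δt * ∑ j ∈ Finset.Icc 2 s, b s / b j * chebU ℝ (s - j) ω0 * μ j :=
  mixed_precision_rkc2_consistency_general s hs ϑ hϑ ω0 ω1 b μ ν κ γ c hω0 hω1 hb hb0 hb1 hμ1 hμ hν
    hκ hγ hc0 hc1 hc f yhat Δt hΔt f' K Δf r hΔf hr d hd0 hd1 hd yhat' hyhat'
end
end

section
/- Let s ≥ 1, ω0, ω1 ∈ ℝ, let b_0, …, b_s ∈ ℝ be nonzero, set a_j = 1 − b_j T_j(ω0), and take the RKC coefficients μ_j, ν_j, κ_j, γ_j. Let A and ΔA_1, …, ΔA_{s−1} be real n×n matrices, Δt ∈ ℝ, and ŷ ∈ ℝⁿ. Define d̂_0 = 0, d̂_1 = μ_1 Δt A ŷ, and d̂_j = ν_j d̂_{j−1} + κ_j d̂_{j−2} + μ_j Δt (A + ΔA_{j−1}) d̂_{j−1} + (μ_j + γ_j) Δt A ŷ for 2 ≤ j ≤ s. Define R_k(Δt A) = (1 − b_k T_k(ω0)) I + b_k T_k(ω0 I + ω1 Δt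 A). Then for every 1 ≤ k ≤ s: d̂_k = (R_k(Δt A) − I) ŷ + r_k, where r_k = 2 ω1 Δt Σ_{j=1}^{k−1} (b_k/b_j) U_{k−j−1}(ω0 I + ω1 Δt A) ΔA_j d̂_j. -/
/-!
Dividing the stage recursion by `b_j` turns it, for `e_j = d̂_j / b_j` and `Z = ω₀ I + ω₁ Δt A`,
into the forced Chebyshev recurrence
`e_{j+2} = 2 Z e_{j+1} - e_j + 2 ω₁ Δt ΔA_{j+1} e_{j+1} + 2 T_{j+1}(ω₀) (Z - ω₀ I) ŷ`.
The vectors `(T_j(Z) - T_j(ω₀) I) ŷ` satisfy the same recurrence without the `ΔA` term and have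
the same initial values `e_0, e_1`. The difference therefore solves the homogeneous three-term
recurrence forced by `2 ω₁ Δt ΔA_j e_j` from zero initial data, and Duhamel's principle, with
`U_{k-1}(Z)` as fundamental solution, writes it as `Σ_j U_{k-j-1}(Z) (2 ω₁ Δt ΔA_j e_j)`.
-/

noncomputable section

theorem chebT_add_two {R : Type*} [Ring R] (k : ℕ) (x : R) :
    chebT R (k + 2) x = 2 * x * chebT R (k + 1) x - chebT R k x := rfl

theorem chebU_add_two {R : Type*} [Ring R] (k : ℕ) (x : R) :
    chebU R (k + 2) x = 2 * x * chebU R (k + 1) x - chebU R k x := rfl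

section Duhamel

variable {R M : Type*} [Ring R] [AddCommGroup M] [Module R M]

theorem sum_Ico_chebU_smul_add_two (z : R) (g : ℕ → M) (k : ℕ) :
    ∑ j ∈ Finset.Ico 1 (k + 2), chebU R (k + 2 - j - 1) z • g j
      = (2 * z) • ∑ j ∈ Finset.Ico 1 (k + 1), chebU R (k + 1 - j - 1) z • g j
        - ∑ j ∈ Finset.Ico 1 k, chebU R (k - j - 1) z • g j + g (k + 1) := by
  rcases Nat.eq_zero_or_pos k with rfl | hk
  · simp [chebU]
  rw [Finset.sum_Ico_succ_top (by omega : 1 ≤ k + 1), Finset.sum_Ico_succ_top hk,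
    Finset.sum_Ico_succ_top hk (fun j => chebU R (k + 1 - j - 1) z • g j), smul_add,
    Finset.smul_sum]
  have hinner : ∀ j ∈ Finset.Ico 1 k, chebU R (k + 2 - j - 1) z • g j
      = (2 * z) • chebU R (k + 1 - j - 1) z • g j - chebU R (k - j - 1) z • g j := by
    intro j hj
    rw [Finset.mem_Ico] at hj
    rw [show k + 2 - j - 1 = k - j - 1 + 2 by omega, show k + 1 - j - 1 = k - j - 1 + 1 by omega,
      chebU_add_two, sub_smul, mul_smul]
  rw [Finset.sum_congr rfl hinner, Finset.sum_sub_distrib]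
  simp only [show k + 2 - k - 1 = 1 by omega, show k + 1 - k - 1 = 0 by omega,
    show k + 2 - (k + 1) - 1 = 0 by omega, chebU, one_smul]
  abel

theorem eq_sum_Ico_chebU_smul_of_recurrence (z : R) (w g : ℕ → M) (N : ℕ)
    (h0 : w 0 = 0) (h1 : w 1 = 0)
    (hrec : ∀ j, j + 2 ≤ N → w (j + 2) = (2 * z) • w (j + 1) - w j + g (j + 1)) :
    ∀ k ≤ N, w k = ∑ j ∈ Finset.Ico 1 k, chebU R (k - j - 1) z • g j := by
  intro k
  induction k using Nat.strong_induction_on with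
  | _ k ih =>
    intro hk
    match k with
    | 0 => simp [h0]
    | 1 => simp [h1]
    | k + 2 =>
      rw [hrec k hk, ih k (by omega) (by omega), ih (k + 1) (by omega) (by omega),
        sum_Ico_chebU_smul_add_two]

theorem eq_add_sum_Ico_chebU_smul_of_recurrence (z : R) (u v g f : ℕ → M) (N : ℕ)
    (h0 : u 0 = v 0) (h1 : u 1 = v 1)
    (hu : ∀ j, j + 2 ≤ N → u (j + 2) = (2 * z) • u (j + 1) - u j + g (j + 1) + f (j + 1))
    (hv : ∀ j, j + 2 ≤ N → v (j + 2) = (2 * z) • v (j + 1) - v j + f (j + 1)) :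
    ∀ k ≤ N, u k = v k + ∑ j ∈ Finset.Ico 1 k, chebU R (k - j - 1) z • g j := by
  intro k hk
  rw [← eq_sum_Ico_chebU_smul_of_recurrence z (u - v) g N (by simp [h0]) (by simp [h1])
    (fun j hj => by simp only [Pi.sub_apply, hu j hj, hv j hj, smul_sub]; abel) k hk]
  simp

end Duhamel

theorem chebT_sub_smul_one_add_two {K R : Type*} [CommRing K] [Ring R] [Algebra K R]
    (c : K) (z : R) (k : ℕ) :
    chebT R (k + 2) z - chebT K (k + 2) c • (1 : R)
      = 2 * z * (chebT R (k + 1) z - chebT K (k + 1) c • 1) - (chebT R k z - chebT K k c • 1)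
        + (2 * chebT K (k + 1) c) • (z - c • 1) := by
  simp only [chebT_add_two, two_mul, add_mul, mul_sub, mul_smul_comm, mul_one]
  module

theorem chebT_sub_smul_one_smul_add_two {K R M : Type*} [CommRing K] [Ring R] [Algebra K R]
    [AddCommGroup M] [Module R M] [Module K M] [IsScalarTower K R M] (c : K) (z : R) (y : M)
    (k : ℕ) :
    (chebT R (k + 2) z - chebT K (k + 2) c • 1) • y
      = (2 * z) • (chebT R (k + 1) z - chebT K (k + 1) c • 1) • y
        - (chebT R k z - chebT K k c • 1) • y + (2 * chebT K (k + 1) c) • (z - c • 1) • y := by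
  rw [chebT_sub_smul_one_add_two, add_smul, sub_smul, mul_smul, smul_assoc]

theorem inv_smul_eq_of_rkc_stage {ι : Type*} [Fintype ι] [DecidableEq ι]
    {ω0 ω1 Δt t β0 β1 β2 μ ν κ γ : ℝ} (hβ1 : β1 ≠ 0) (hβ2 : β2 ≠ 0)
    (hμ : μ = 2 * ω1 * β2 / β1) (hν : ν = 2 * ω0 * β2 / β1) (hκ : κ = -(β2 / β0))
    (hγ : γ = -(μ * (1 - β1 * t))) {z A E : Matrix ι ι ℝ} (hz : z = ω0 • 1 + (ω1 * Δt) • A)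
    {y d0 d1 d2 : ι → ℝ}
    (hd : d2 = ν • d1 + κ • d0 + (μ * Δt) • (A + E) • d1 + ((μ + γ) * Δt) • A • y) :
    β2⁻¹ • d2 = (2 * z) • (β1⁻¹ • d1) - β0⁻¹ • d0 + (2 * ω1 * Δt) • E • (β1⁻¹ • d1)
      + (2 * t) • (z - ω0 • 1) • y := by
  have h2z : 2 * z = (2 * ω0) • 1 + (2 * ω1 * Δt) • A := by rw [hz, two_mul]; module
  have hz1 : z - ω0 • 1 = (ω1 * Δt) • A := by rw [hz]; abel
  subst hd hμ hν hκ hγ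
  rw [h2z, hz1]
  simp only [add_smul, smul_add, one_smul, smul_assoc, smul_comm _ (β1⁻¹ : ℝ)]
  -- hide the matrix action, otherwise `match_scalars` takes the matrices as scalars
  generalize A • d1 = u; generalize E • d1 = v; generalize A • y = w
  match_scalars <;> field_simp
  all_goals ring

theorem mixed_precision_rkc_rounding_identity_general
    {n : ℕ} (s : ℕ) (ω0 ω1 : ℝ) (b : ℕ → ℝ) (hb : ∀ j, j ≤ s → b j ≠ 0)
    (μ ν κ γ : ℕ → ℝ)
    (hμ1 : μ 1 = b 1 * ω1)
    (hμ : ∀ j, 2 ≤ j → j ≤ s → μ j = 2 * ω1 * b j / b (j - 1))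
    (hν : ∀ j, 2 ≤ j → j ≤ s → ν j = 2 * ω0 * b j / b (j - 1))
    (hκ : ∀ j, 2 ≤ j → j ≤ s → κ j = -(b j / b (j - 2)))
    (hγ : ∀ j, 2 ≤ j → j ≤ s → γ j = -(μ j * (1 - b (j - 1) * chebT ℝ (j - 1) ω0)))
    (A : Matrix (Fin n) (Fin n) ℝ) (ΔA : ℕ → Matrix (Fin n) (Fin n) ℝ)
    (Δt : ℝ) (yhat : Fin n → ℝ)
    (dh : ℕ → (Fin n → ℝ))
    (hdh0 : dh 0 = 0) (hdh1 : dh 1 = (μ 1 * Δt) • A.mulVec yhat)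
    (hdh : ∀ j, 2 ≤ j → j ≤ s →
      dh j = ν j • dh (j - 1) + κ j • dh (j - 2)
        + (μ j * Δt) • (A + ΔA (j - 1)).mulVec (dh (j - 1))
        + ((μ j + γ j) * Δt) • A.mulVec yhat) :
    ∀ k, 1 ≤ k → k ≤ s →
      dh k =
        (((1 - b k * chebT ℝ k ω0) • (1 : Matrix (Fin n) (Fin n) ℝ)
            + b k • chebT (Matrix (Fin n) (Fin n) ℝ) k
                (ω0 • (1 : Matrix (Fin n) (Fin n) ℝ) + (ω1 * Δt) • A)
            - 1).mulVec yhat)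
        + (2 * ω1 * Δt) • ∑ j ∈ Finset.Ico 1 k, (b k / b j) •
            ((chebU (Matrix (Fin n) (Fin n) ℝ) (k - j - 1)
                (ω0 • (1 : Matrix (Fin n) (Fin n) ℝ) + (ω1 * Δt) • A)
              * ΔA j).mulVec (dh j)) := by
  intro k hk1 hks
  set Z := ω0 • (1 : Matrix (Fin n) (Fin n) ℝ) + (ω1 * Δt) • A with hZ
  have hnormalized := eq_add_sum_Ico_chebU_smul_of_recurrence Z
    (fun j => (b j)⁻¹ • dh j) (fun j => (chebT _ j Z - chebT ℝ j ω0 • 1) • yhat)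
    (fun j => (2 * ω1 * Δt) • ΔA j • ((b j)⁻¹ • dh j))
    (fun j => (2 * chebT ℝ j ω0) • (Z - ω0 • 1) • yhat) k
    (by simp [hdh0, chebT])
    (by rw [hdh1, hμ1, smul_smul, mul_assoc, inv_mul_cancel_left₀ (hb 1 (by omega))]
        simp [chebT, hZ])
    (fun j hj => inv_smul_eq_of_rkc_stage (hb (j + 1) (by omega)) (hb (j + 2) (by omega))
        (hμ (j + 2) (by omega) (by omega)) (hν (j + 2) (by omega) (by omega))
        (hκ (j + 2) (by omega) (by omega)) (hγ (j + 2) (by omega) (by omega)) hZ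
        (hdh (j + 2) (by omega) (by omega)))
    (fun j _ => chebT_sub_smul_one_smul_add_two ω0 Z yhat j) k le_rfl
  rw [inv_smul_eq_iff₀ (hb k hks)] at hnormalized
  rw [hnormalized, smul_add]
  simp only [← Matrix.smul_eq_mulVec]
  congr 1
  · rw [← smul_assoc]
    congr 1
    module
  · simp only [Finset.smul_sum]
    refine Finset.sum_congr rfl fun j _ => ?_
    rw [mul_smul]
    simp only [smul_comm (_ : Matrix (Fin n) (Fin n) ℝ) (_ : ℝ), smul_smul]
    congr 1
    ring

/-- for the linear mixed-precision RKC recursion with perturbation matrices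
`ΔA_j`, each stage satisfies `d̂_k = (R_k(Δt A) − I) ŷ + r_k` with
`r_k = 2 ω1 Δt Σ_{j=1}^{k−1} (b_k/b_j) U_{k−j−1}(ω0 I + ω1 Δt A) ΔA_j d̂_j`. -/
theorem mixed_precision_rkc_rounding_identity
    {n : ℕ} (s : ℕ) (hs : 1 ≤ s) (ω0 ω1 : ℝ) (b : ℕ → ℝ) (hb : ∀ j, j ≤ s → b j ≠ 0)
    (μ ν κ γ : ℕ → ℝ)
    (hμ1 : μ 1 = b 1 * ω1)
    (hμ : ∀ j, 2 ≤ j → j ≤ s → μ j = 2 * ω1 * b j / b (j - 1))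
    (hν : ∀ j, 2 ≤ j → j ≤ s → ν j = 2 * ω0 * b j / b (j - 1))
    (hκ : ∀ j, 2 ≤ j → j ≤ s → κ j = -(b j / b (j - 2)))
    (hγ : ∀ j, 2 ≤ j → j ≤ s → γ j = -(μ j * (1 - b (j - 1) * chebT ℝ (j - 1) ω0)))
    (A : Matrix (Fin n) (Fin n) ℝ) (ΔA : ℕ → Matrix (Fin n) (Fin n) ℝ)
    (Δt : ℝ) (yhat : Fin n → ℝ)
    (dh : ℕ → (Fin n → ℝ))
    (hdh0 : dh 0 = 0) (hdh1 : dh 1 = (μ 1 * Δt) • A.mulVec yhat)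
    (hdh : ∀ j, 2 ≤ j → j ≤ s →
      dh j = ν j • dh (j - 1) + κ j • dh (j - 2)
        + (μ j * Δt) • (A + ΔA (j - 1)).mulVec (dh (j - 1))
        + ((μ j + γ j) * Δt) • A.mulVec yhat) :
    ∀ k, 1 ≤ k → k ≤ s →
      dh k =
        (((1 - b k * chebT ℝ k ω0) • (1 : Matrix (Fin n) (Fin n) ℝ)
            + b k • chebT (Matrix (Fin n) (Fin n) ℝ) k
                (ω0 • (1 : Matrix (Fin n) (Fin n) ℝ) + (ω1 * Δt) • A)
            - 1).mulVec yhat)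
        + (2 * ω1 * Δt) • ∑ j ∈ Finset.Ico 1 k, (b k / b j) •
            ((chebU (Matrix (Fin n) (Fin n) ℝ) (k - j - 1)
                (ω0 • (1 : Matrix (Fin n) (Fin n) ℝ) + (ω1 * Δt) • A)
              * ΔA j).mulVec (dh j)) :=
  mixed_precision_rkc_rounding_identity_general s ω0 ω1 b hb μ ν κ γ hμ1 hμ hν hκ hγ A ΔA Δt yhat dh
    hdh0 hdh1 hdh
end
end

section
/- Let s ≥ 1, ω0 ≥ 1, ω1 > 0, let b_0, …, b_s > 0 satisfy b_k/b_j ≤ 3/2 for all 0 ≤ j ≤ k ≤ s, set a_j = 1 − b_j T_j(ω0), and take the RKC coefficients μ_j, ν_j, κ_j, γ_j. Let A be a real symmetric n×n matrix with all eigenvalues in [−ρ, 0], ρ ≥ 0, let Δt > 0 satisfy Δt·ρ ≤ 2ω0/ω1, and let ΔA_1, …, ΔA_{s−1} be real n×n matrices with ‖ΔA_j‖₂ ≤ δ for all j. Let ŷ ∈ ℝⁿ, define d̂_0 = 0, d̂_1 = μ_1 Δt A ŷ, d̂_j = ν_j d̂_{j−1} + κ_j d̂_{j−2} + μ_j Δt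 (A + ΔA_{j−1}) d̂_{j−1} + (μ_j + γ_j) Δt A ŷ for 2 ≤ j ≤ s, and set R_k(Δt A) = (1 − b_k T_k(ω0)) I + b_k T_k(ω0 I + ω1 Δt A) and r_s = d̂_s − (R_s(Δt A) − I) ŷ. Put Θ = 3 ω1 Δt δ · max_{0 ≤ j ≤ s−2} ‖U_j(ω0 I + ω1 Δt A)‖₂. Then ‖r_s‖₂ ≤ ( max_{1 ≤ k ≤ s−1} ‖R_k(Δt A) − I‖₂ ) · ( (1 + Θ)^{s−1} − 1 ) · ‖ŷ‖₂. -/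
noncomputable section

namespace RKCaux

variable {n : ℕ}

lemma specNorm_nonneg {m k : ℕ} (A : Matrix (Fin m) (Fin k) ℝ) : 0 ≤ specNorm A :=
  norm_nonneg _

lemma norm_TL_le (B : Matrix (Fin n) (Fin n) ℝ) (v : EuclideanSpace ℝ (Fin n)) :
    ‖Matrix.toEuclideanLin B v‖ ≤ specNorm B * ‖v‖ :=
  (Matrix.toEuclideanLin B).toContinuousLinearMap.le_opNorm v

lemma TL_mul (B C : Matrix (Fin n) (Fin n) ℝ) (v : EuclideanSpace ℝ (Fin n)) :
    Matrix.toEuclideanLin (B * C) v = Matrix.toEuclideanLin B (Matrix.toEuclideanLin C v) := by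
  simp [Matrix.toEuclideanLin_apply]

lemma TL_one (v : EuclideanSpace ℝ (Fin n)) :
    Matrix.toEuclideanLin (1 : Matrix (Fin n) (Fin n) ℝ) v = v := by
  simp [Matrix.toEuclideanLin_apply]

lemma TL_add (B C : Matrix (Fin n) (Fin n) ℝ) (v : EuclideanSpace ℝ (Fin n)) :
    Matrix.toEuclideanLin (B + C) v = Matrix.toEuclideanLin B v + Matrix.toEuclideanLin C v := by
  simp [map_add, LinearMap.add_apply]

lemma TL_sub (B C : Matrix (Fin n) (Fin n) ℝ) (v : EuclideanSpace ℝ (Fin n)) :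
    Matrix.toEuclideanLin (B - C) v = Matrix.toEuclideanLin B v - Matrix.toEuclideanLin C v := by
  simp [map_sub, LinearMap.sub_apply]

lemma TL_smulM (c : ℝ) (B : Matrix (Fin n) (Fin n) ℝ) (v : EuclideanSpace ℝ (Fin n)) :
    Matrix.toEuclideanLin (c • B) v = c • Matrix.toEuclideanLin B v := by
  simp [map_smul, LinearMap.smul_apply]

lemma le_biSup_fin (t : Finset ℕ) (f : ℕ → ℝ) (hf : ∀ i, 0 ≤ f i) {k : ℕ} (hk : k ∈ t) :
    f k ≤ ⨆ i ∈ t, f i := by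
  have hbdd : BddAbove (Set.range fun i => ⨆ _ : i ∈ t, f i) := by
    refine ⟨∑ i ∈ t, f i, ?_⟩
    rintro x ⟨i, rfl⟩
    show (⨆ _ : i ∈ t, f i) ≤ ∑ i ∈ t, f i
    by_cases h : i ∈ t
    · haveI : Nonempty (i ∈ t) := ⟨h⟩
      rw [ciSup_const]
      exact Finset.single_le_sum (fun j _ => hf j) h
    · haveI : IsEmpty (i ∈ t) := ⟨h⟩
      rw [Real.iSup_of_isEmpty]
      exact Finset.sum_nonneg fun j _ => hf j
  calc f k = ⨆ _ : k ∈ t, f k := by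
        haveI : Nonempty (k ∈ t) := ⟨hk⟩
        rw [ciSup_const]
    _ ≤ ⨆ i ∈ t, f i := le_ciSup hbdd k

theorem rkc_num (ε : ℕ → ℝ) (C Θ : ℝ) (hΘ : 0 ≤ Θ) (s : ℕ)
    (h0 : ε 0 = 0) (h1 : ε 1 = 0)
    (hrec : ∀ m, m + 2 ≤ s → ε (m+2) ≤ ∑ i ∈ Finset.range (m+1), Θ * (ε (i+1) + C)) :
    ∀ j, j ≤ s → ε j ≤ C * ((1+Θ)^(j-1) - 1) := by
  intro j
  induction j using Nat.strong_induction_on with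
  | _ j IH =>
    rcases j with _ | (_ | m)
    · intro _; simp [h0]
    · intro _; simp [h1]
    · intro hj
      have hj' : m + 2 ≤ s := hj
      have hsum : ∀ i ∈ Finset.range (m+1), Θ * (ε (i+1) + C) ≤ Θ * C * (1+Θ)^i := by
        intro i hi
        have him := Finset.mem_range.mp hi
        have hIH := IH (i+1) (by omega) (by omega)
        rw [show i+1-1 = i from rfl] at hIH
        have hp : (0:ℝ) ≤ (1+Θ)^i := pow_nonneg (by linarith) i
        nlinarith
      calc ε (m+2) ≤ ∑ i ∈ Finset.range (m+1), Θ * (ε (i+1) + C) := hrec m hj'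
        _ ≤ ∑ i ∈ Finset.range (m+1), Θ * C * (1+Θ)^i := Finset.sum_le_sum hsum
        _ = C * ((1+Θ)^(m+1) - 1) := by
            rw [← Finset.mul_sum]
            have hg := geom_sum_mul (1+Θ) (m+1)
            have h2 : (1+Θ) - 1 = Θ := by ring
            rw [h2] at hg
            linear_combination C * hg
        _ = C * ((1+Θ)^(m+2-1) - 1) := by norm_num

theorem rkc_rep (s : ℕ) (Mt : Matrix (Fin n) (Fin n) ℝ) (b : ℕ → ℝ)
    (hb : ∀ j, j ≤ s → b j ≠ 0)
    (f e : ℕ → EuclideanSpace ℝ (Fin n)) (he0 : e 0 = 0) (he1 : e 1 = 0)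
    (herec : ∀ m, m + 2 ≤ s → e (m+2) =
      (2*(b (m+2)/b (m+1))) • Matrix.toEuclideanLin Mt (e (m+1))
        - (b (m+2)/b m) • e m + f (m+2)) :
    ∀ j, j ≤ s → e j = ∑ i ∈ Finset.range (j-1),
      (b j / b (i+2)) • Matrix.toEuclideanLin
        (chebU (Matrix (Fin n) (Fin n) ℝ) (j-(i+2)) Mt) (f (i+2)) := by
  intro j
  induction j using Nat.strong_induction_on with
  | _ j IH =>
    rcases j with _ | (_ | (_ | m))
    · intro _; simp [he0]
    · intro _; simp [he1]
    · intro h2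
      have hE : e 2 = (2*(b 2/b 1)) • Matrix.toEuclideanLin Mt (e 1)
          - (b 2/b 0) • e 0 + f 2 := herec 0 h2
      rw [hE, he0, he1, map_zero, smul_zero, smul_zero]
      rw [show (2:ℕ)-1 = 1 from rfl, Finset.sum_range_one,
        show chebU (Matrix (Fin n) (Fin n) ℝ) (2-(0+2)) Mt = 1 from rfl,
        TL_one, div_self (hb 2 h2), one_smul]
      abel
    · intro hj
      have hj' : m + 3 ≤ s := hj
      show e (m+3) = ∑ i ∈ Finset.range (m+2),
        (b (m+3) / b (i+2)) • Matrix.toEuclideanLin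
          (chebU (Matrix (Fin n) (Fin n) ℝ) ((m+3)-(i+2)) Mt) (f (i+2))
      have hb3 := hb (m+3) hj'
      have hb2 := hb (m+2) (by omega)
      have hb1 := hb (m+1) (by omega)
      simp only [show ∀ i, m+3-(i+2) = m+1-i from fun i => by omega]
      have h1 : e (m+2) = ∑ i ∈ Finset.range (m+1),
          (b (m+2)/b (i+2)) • Matrix.toEuclideanLin
            (chebU (Matrix (Fin n) (Fin n) ℝ) (m-i) Mt) (f (i+2)) := by
        have h := IH (m+2) (by omega) (by omega)
        rw [show m+2-1 = m+1 from rfl] at h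
        rw [h]
        exact Finset.sum_congr rfl fun i _ => by rw [show m+2-(i+2) = m-i by omega]
      have h2 : e (m+1) = ∑ i ∈ Finset.range m,
          (b (m+1)/b (i+2)) • Matrix.toEuclideanLin
            (chebU (Matrix (Fin n) (Fin n) ℝ) (m-1-i) Mt) (f (i+2)) := by
        have h := IH (m+1) (by omega) (by omega)
        rw [show m+1-1 = m from rfl] at h
        rw [h]
        exact Finset.sum_congr rfl fun i _ => by rw [show m+1-(i+2) = m-1-i by omega]
      have hE : e (m+3) = (2*(b (m+3)/b (m+2))) • Matrix.toEuclideanLin Mt (e (m+2))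
          - (b (m+3)/b (m+1)) • e (m+1) + f (m+3) := herec (m+1) (by omega)
      have hterm : ∀ i ∈ Finset.range m,
          (2*(b (m+3)/b (m+2))) • Matrix.toEuclideanLin Mt
              ((b (m+2)/b (i+2)) • Matrix.toEuclideanLin
                (chebU (Matrix (Fin n) (Fin n) ℝ) (m-i) Mt) (f (i+2)))
            - (b (m+3)/b (m+1)) • ((b (m+1)/b (i+2)) • Matrix.toEuclideanLin
                (chebU (Matrix (Fin n) (Fin n) ℝ) (m-1-i) Mt) (f (i+2)))
          = (b (m+3)/b (i+2)) • Matrix.toEuclideanLin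
                (chebU (Matrix (Fin n) (Fin n) ℝ) (m+1-i) Mt) (f (i+2)) := by
        intro i hi
        have him := Finset.mem_range.mp hi
        have hbi := hb (i+2) (by omega)
        obtain ⟨p, rfl⟩ : ∃ p, m = i + p + 1 := ⟨m - i - 1, by omega⟩
        rw [show i+p+1-i = p+1 by omega, show i+p+1-1-i = p by omega,
          show i+p+1+1-i = p+2 by omega]
        rw [show chebU (Matrix (Fin n) (Fin n) ℝ) (p+2) Mt
            = 2*Mt*chebU (Matrix (Fin n) (Fin n) ℝ) (p+1) Mt
              - chebU (Matrix (Fin n) (Fin n) ℝ) p Mt from rfl]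
        rw [show (2 : Matrix (Fin n) (Fin n) ℝ)*Mt*chebU (Matrix (Fin n) (Fin n) ℝ) (p+1) Mt
            = (2:ℝ)•(Mt * chebU (Matrix (Fin n) (Fin n) ℝ) (p+1) Mt) by
          rw [two_smul, two_mul, add_mul]]
        rw [map_sub, LinearMap.sub_apply, TL_smulM, TL_mul, map_smul]
        match_scalars <;> field_simp <;> ring
      have hcomb :
          (∑ i ∈ Finset.range m, (2*(b (m+3)/b (m+2))) • Matrix.toEuclideanLin Mt
              ((b (m+2)/b (i+2)) • Matrix.toEuclideanLin
                (chebU (Matrix (Fin n) (Fin n) ℝ) (m-i) Mt) (f (i+2))))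
            - (∑ i ∈ Finset.range m, (b (m+3)/b (m+1)) • ((b (m+1)/b (i+2)) • Matrix.toEuclideanLin
                (chebU (Matrix (Fin n) (Fin n) ℝ) (m-1-i) Mt) (f (i+2))))
          = ∑ i ∈ Finset.range m, (b (m+3)/b (i+2)) • Matrix.toEuclideanLin
                (chebU (Matrix (Fin n) (Fin n) ℝ) (m+1-i) Mt) (f (i+2)) := by
        rw [← Finset.sum_sub_distrib]
        exact Finset.sum_congr rfl hterm
      have htopm : (2*(b (m+3)/b (m+2))) • Matrix.toEuclideanLin Mt
            ((b (m+2)/b (m+2)) • Matrix.toEuclideanLin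
              (chebU (Matrix (Fin n) (Fin n) ℝ) (m-m) Mt) (f (m+2)))
          = (b (m+3)/b (m+2)) • Matrix.toEuclideanLin
              (chebU (Matrix (Fin n) (Fin n) ℝ) (m+1-m) Mt) (f (m+2)) := by
        rw [Nat.sub_self, show m+1-m = 1 by omega, div_self hb2,
          show chebU (Matrix (Fin n) (Fin n) ℝ) 0 Mt = 1 from rfl,
          show chebU (Matrix (Fin n) (Fin n) ℝ) 1 Mt = 2*Mt from rfl,
          TL_one, one_smul,
          show (2 : Matrix (Fin n) (Fin n) ℝ) * Mt = (2:ℝ) • Mt by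
            rw [two_smul, two_mul], TL_smulM]
        match_scalars; ring
      have hgm1 : (b (m+3)/b (m+1+2)) • Matrix.toEuclideanLin
            (chebU (Matrix (Fin n) (Fin n) ℝ) (m+1-(m+1)) Mt) (f (m+1+2))
          = f (m+3) := by
        rw [Nat.sub_self, show m+1+2 = m+3 from rfl, div_self hb3,
          show chebU (Matrix (Fin n) (Fin n) ℝ) 0 Mt = 1 from rfl, TL_one, one_smul]
      rw [hE, h1, h2]
      conv_lhs => rw [Finset.sum_range_succ, map_add, smul_add, map_sum,
        Finset.smul_sum, Finset.smul_sum]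
      conv_rhs => rw [Finset.sum_range_succ, Finset.sum_range_succ]
      rw [htopm, hgm1, ← hcomb]
      abel

end RKCaux


set_option maxHeartbeats 2000000 in
/-- rounding-error bound for one step of the linear mixed-precision RKC scheme:
`‖r_s‖₂ ≤ (max_{1≤k≤s−1} ‖R_k(Δt A) − I‖₂) ((1 + Θ)^{s−1} − 1) ‖ŷ‖₂`. -/
theorem mixed_precision_rkc_rounding_bound
    {n : ℕ} (s : ℕ) (hs : 1 ≤ s) (ω0 ω1 : ℝ) (hω0 : 1 ≤ ω0) (hω1 : 0 < ω1)
    (b : ℕ → ℝ) (hb : ∀ j, j ≤ s → 0 < b j)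
    (hbratio : ∀ j k, j ≤ k → k ≤ s → b k / b j ≤ 3 / 2)
    (μ ν κ γ : ℕ → ℝ)
    (hμ1 : μ 1 = b 1 * ω1)
    (hμ : ∀ j, 2 ≤ j → j ≤ s → μ j = 2 * ω1 * b j / b (j - 1))
    (hν : ∀ j, 2 ≤ j → j ≤ s → ν j = 2 * ω0 * b j / b (j - 1))
    (hκ : ∀ j, 2 ≤ j → j ≤ s → κ j = -(b j / b (j - 2)))
    (hγ : ∀ j, 2 ≤ j → j ≤ s → γ j = -(μ j * (1 - b (j - 1) * chebT ℝ (j - 1) ω0)))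
    (A : Matrix (Fin n) (Fin n) ℝ) (hA : A.IsHermitian)
    (ρ : ℝ) (hρ : 0 ≤ ρ) (heig : ∀ i, hA.eigenvalues i ∈ Set.Icc (-ρ) 0)
    (Δt : ℝ) (hΔt : 0 < Δt) (hstab : Δt * ρ ≤ 2 * ω0 / ω1)
    (ΔA : ℕ → Matrix (Fin n) (Fin n) ℝ) (δ : ℝ)
    (hΔA : ∀ j, 1 ≤ j → j ≤ s - 1 → specNorm (ΔA j) ≤ δ)
    (yhat : EuclideanSpace ℝ (Fin n))
    (dh : ℕ → EuclideanSpace ℝ (Fin n))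
    (hdh0 : dh 0 = 0)
    (hdh1 : dh 1 = (μ 1 * Δt) • Matrix.toEuclideanLin A yhat)
    (hdh : ∀ j, 2 ≤ j → j ≤ s →
      dh j = ν j • dh (j - 1) + κ j • dh (j - 2)
        + (μ j * Δt) • Matrix.toEuclideanLin (A + ΔA (j - 1)) (dh (j - 1))
        + ((μ j + γ j) * Δt) • Matrix.toEuclideanLin A yhat)
    (Rm : ℕ → Matrix (Fin n) (Fin n) ℝ)
    (hRm : ∀ k, k ≤ s → Rm k =
      (1 - b k * chebT ℝ k ω0) • (1 : Matrix (Fin n) (Fin n) ℝ)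
        + b k • chebT (Matrix (Fin n) (Fin n) ℝ) k
            (ω0 • (1 : Matrix (Fin n) (Fin n) ℝ) + (ω1 * Δt) • A))
    (rs : EuclideanSpace ℝ (Fin n))
    (hrs : rs = dh s - Matrix.toEuclideanLin (Rm s - 1) yhat)
    (Θ : ℝ)
    (hΘ : Θ = 3 * ω1 * Δt * δ *
      ⨆ j ∈ Finset.Icc 0 (s - 2), specNorm
        (chebU (Matrix (Fin n) (Fin n) ℝ) j
          (ω0 • (1 : Matrix (Fin n) (Fin n) ℝ) + (ω1 * Δt) • A))) :
    ‖rs‖ ≤ (⨆ k ∈ Finset.Icc 1 (s - 1), specNorm (Rm k - 1))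
      * ((1 + Θ) ^ (s - 1) - 1) * ‖yhat‖ := by
  classical
  -- abbreviations
  set Mt : Matrix (Fin n) (Fin n) ℝ := ω0 • (1 : Matrix (Fin n) (Fin n) ℝ) + (ω1 * Δt) • A
    with hMtdef
  set Us : ℝ := ⨆ j ∈ Finset.Icc 0 (s - 2), specNorm
      (chebU (Matrix (Fin n) (Fin n) ℝ) j Mt) with hUsdef
  set MR : ℝ := ⨆ k ∈ Finset.Icc 1 (s - 1), specNorm (Rm k - 1) with hMRdef
  clear_value Mt Us MR
  have hbne : ∀ j, j ≤ s → b j ≠ 0 := fun j hj => ne_of_gt (hb j hj)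
  have hRm1 : Rm 1 - 1 = (b 1 * (ω1 * Δt)) • A := by
    rw [hRm 1 hs, show chebT ℝ 1 ω0 = ω0 from rfl,
      show chebT (Matrix (Fin n) (Fin n) ℝ) 1 Mt = Mt from rfl, hMtdef]
    module
  rcases eq_or_lt_of_le hs with hs1 | hs2
  · -- s = 1 : the residual is zero
    have hrs0 : (μ 1 * Δt) • Matrix.toEuclideanLin A yhat
        - (b 1 * (ω1 * Δt)) • Matrix.toEuclideanLin A yhat = (0 : EuclideanSpace ℝ (Fin n)) := by
      rw [hμ1]; match_scalars; ring
    rw [hrs, ← hs1, hdh1, hRm1, RKCaux.TL_smulM, hrs0, norm_zero]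
    norm_num
  · -- main case : 2 ≤ s
    have hs2' : 2 ≤ s := hs2
    have hδ0 : 0 ≤ δ := le_trans (RKCaux.specNorm_nonneg _) (hΔA 1 le_rfl (by omega))
    have hUsle : ∀ j, j ≤ s - 2 →
        specNorm (chebU (Matrix (Fin n) (Fin n) ℝ) j Mt) ≤ Us := by
      intro j hj
      rw [hUsdef]
      exact RKCaux.le_biSup_fin (Finset.Icc 0 (s-2))
        (fun i => specNorm (chebU (Matrix (Fin n) (Fin n) ℝ) i Mt))
        (fun i => RKCaux.specNorm_nonneg _)
        (Finset.mem_Icc.mpr ⟨Nat.zero_le _, hj⟩)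
    have hUs0 : 0 ≤ Us := le_trans (RKCaux.specNorm_nonneg _) (hUsle 0 (Nat.zero_le _))
    have hΘ0 : 0 ≤ Θ := by
      rw [hΘ]
      have : (0:ℝ) ≤ 3 * ω1 * Δt * δ := by positivity
      exact mul_nonneg this hUs0
    have hMRle : ∀ k, 1 ≤ k → k ≤ s - 1 → specNorm (Rm k - 1) ≤ MR := by
      intro k h1 h2
      rw [hMRdef]
      exact RKCaux.le_biSup_fin (Finset.Icc 1 (s-1))
        (fun i => specNorm (Rm i - 1))
        (fun i => RKCaux.specNorm_nonneg _)
        (Finset.mem_Icc.mpr ⟨h1, h2⟩)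
    have hMR0 : 0 ≤ MR := le_trans (RKCaux.specNorm_nonneg _) (hMRle 1 le_rfl (by omega))
    have hC0 : 0 ≤ MR * ‖yhat‖ := mul_nonneg hMR0 (norm_nonneg _)
    -- error and perturbation sequences
    set e : ℕ → EuclideanSpace ℝ (Fin n) :=
      fun j => dh j - Matrix.toEuclideanLin (Rm j - 1) yhat with hedef
    set f : ℕ → EuclideanSpace ℝ (Fin n) :=
      fun k => (μ k * Δt) • Matrix.toEuclideanLin (ΔA (k-1)) (dh (k-1)) with hfdef
    clear_value e f
    have hedefj : ∀ j, e j = dh j - Matrix.toEuclideanLin (Rm j - 1) yhat := fun j => by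
      rw [hedef]
    have hfdefj : ∀ k, f k = (μ k * Δt) • Matrix.toEuclideanLin (ΔA (k-1)) (dh (k-1)) :=
      fun k => by rw [hfdef]
    have hMtapp : ∀ v : EuclideanSpace ℝ (Fin n), Matrix.toEuclideanLin Mt v
        = ω0 • v + (ω1 * Δt) • Matrix.toEuclideanLin A v := by
      intro v
      rw [hMtdef, RKCaux.TL_add, RKCaux.TL_smulM, RKCaux.TL_smulM, RKCaux.TL_one]
    have he0 : e 0 = 0 := by
      have hRm0 : Rm 0 - 1 = 0 := by
        rw [hRm 0 (Nat.zero_le _), show chebT ℝ 0 ω0 = 1 from rfl,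
          show chebT (Matrix (Fin n) (Fin n) ℝ) 0 Mt = 1 from rfl]
        module
      rw [hedefj 0, hdh0, hRm0]
      simp
    have he1 : e 1 = 0 := by
      rw [hedefj 1, hdh1, hRm1, RKCaux.TL_smulM, hμ1]
      match_scalars; ring
    -- the exact recurrence for the stability matrices
    have hRrec : ∀ m, m + 2 ≤ s → Rm (m+2) - 1
        = ν (m+2) • (Rm (m+1) - 1) + κ (m+2) • (Rm m - 1)
          + (μ (m+2) * Δt) • (A * (Rm (m+1) - 1)) + ((μ (m+2) + γ (m+2)) * Δt) • A := by
      intro m hm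
      have hbm1 : b (m+1) ≠ 0 := hbne (m+1) (by omega)
      have hbm : b m ≠ 0 := hbne m (by omega)
      have e1 := hν (m+2) (by omega) hm
      have e2 := hκ (m+2) (by omega) hm
      have e3 := hμ (m+2) (by omega) hm
      have e4 := hγ (m+2) (by omega) hm
      simp only [show m+2-1 = m+1 from rfl, show m+2-2 = m from rfl] at e1 e2 e3 e4
      rw [e1, e2, e4, e3]
      rw [hRm (m+2) hm, hRm (m+1) (by omega), hRm m (by omega)]
      rw [show chebT (Matrix (Fin n) (Fin n) ℝ) (m+2) Mt
          = 2 * Mt * chebT (Matrix (Fin n) (Fin n) ℝ) (m+1) Mt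
            - chebT (Matrix (Fin n) (Fin n) ℝ) m Mt from rfl]
      rw [show chebT ℝ (m+2) ω0 = 2*ω0*chebT ℝ (m+1) ω0 - chebT ℝ m ω0 from rfl]
      rw [hMtdef]
      simp only [mul_add, mul_sub, add_mul, sub_mul, mul_smul_comm, smul_mul_assoc,
        mul_one, one_mul, smul_smul, smul_add, smul_sub, two_mul]
      match_scalars <;> field_simp <;> ring
    -- the recurrence for the errors
    have herec : ∀ m, m + 2 ≤ s → e (m+2)
        = (2*(b (m+2)/b (m+1))) • Matrix.toEuclideanLin Mt (e (m+1))
          - (b (m+2)/b m) • e m + f (m+2) := by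
      intro m hm
      have hbm1 : b (m+1) ≠ 0 := hbne (m+1) (by omega)
      have hbm : b m ≠ 0 := hbne m (by omega)
      have hd := hdh (m+2) (by omega) hm
      simp only [show m+2-1 = m+1 from rfl, show m+2-2 = m from rfl] at hd
      have e1 := hν (m+2) (by omega) hm
      have e3 := hμ (m+2) (by omega) hm
      have e2 := hκ (m+2) (by omega) hm
      simp only [show m+2-1 = m+1 from rfl, show m+2-2 = m from rfl] at e1 e2 e3
      rw [hedefj, hedefj, hedefj, hfdefj]
      simp only [show m+2-1 = m+1 from rfl]
      rw [hd, hRrec m hm]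
      rw [e1, e2, e3]
      simp only [RKCaux.TL_add, RKCaux.TL_sub, RKCaux.TL_smulM, RKCaux.TL_mul,
        RKCaux.TL_one, hMtapp, map_sub, map_add, map_smul, LinearMap.add_apply,
        LinearMap.sub_apply, LinearMap.smul_apply, smul_add, smul_sub]
      match_scalars
      all_goals field_simp
      all_goals try ring
      all_goals tauto
    -- representation of the error by Chebyshev propagators
    have hrep := RKCaux.rkc_rep s Mt b hbne f e he0 he1 herec
    -- norm recurrence
    have hnorm : ∀ m, m + 2 ≤ s → ‖e (m+2)‖
        ≤ ∑ i ∈ Finset.range (m+1), Θ * (‖e (i+1)‖ + MR * ‖yhat‖) := by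
      intro m hm
      have h := hrep (m+2) hm
      rw [show m+2-1 = m+1 from rfl] at h
      rw [h]
      refine le_trans (norm_sum_le _ _) (Finset.sum_le_sum ?_)
      intro i hi
      have him := Finset.mem_range.mp hi
      have hbi2 : 0 < b (i+2) := hb (i+2) (by omega)
      have hbi1 : 0 < b (i+1) := hb (i+1) (by omega)
      have hbm2 : 0 < b (m+2) := hb (m+2) hm
      have hμi : μ (i+2) = 2 * ω1 * b (i+2) / b (i+1) := by
        have := hμ (i+2) (by omega) (by omega)
        rwa [show i+2-1 = i+1 from rfl] at this
      have hμpos : 0 < μ (i+2) := by rw [hμi]; positivity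
      -- bound on ‖dh (i+1)‖
      have hdh1' : dh (i+1) = e (i+1) + Matrix.toEuclideanLin (Rm (i+1) - 1) yhat := by
        rw [hedefj (i+1)]; abel
      have hRmb : ‖Matrix.toEuclideanLin (Rm (i+1) - 1) yhat‖ ≤ MR * ‖yhat‖ :=
        le_trans (RKCaux.norm_TL_le _ _)
          (mul_le_mul_of_nonneg_right (hMRle (i+1) (by omega) (by omega)) (norm_nonneg _))
      have hdhb : ‖dh (i+1)‖ ≤ ‖e (i+1)‖ + MR * ‖yhat‖ := by
        rw [hdh1']
        exact le_trans (norm_add_le _ _) (by linarith)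
      have hP0 : 0 ≤ ‖e (i+1)‖ + MR * ‖yhat‖ := by positivity
      -- bound on ‖f (i+2)‖
      have hfb : ‖f (i+2)‖ ≤ (μ (i+2) * Δt) * (δ * (‖e (i+1)‖ + MR * ‖yhat‖)) := by
        rw [hfdefj (i+2), show i+2-1 = i+1 from rfl, norm_smul, Real.norm_eq_abs,
          abs_of_pos (by positivity : (0:ℝ) < μ (i+2) * Δt)]
        refine mul_le_mul_of_nonneg_left ?_ (by positivity)
        refine le_trans (RKCaux.norm_TL_le _ _) ?_
        exact mul_le_mul (hΔA (i+1) (by omega) (by omega)) hdhb (norm_nonneg _) hδ0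
      -- bound on chebU factor
      have hu0 : 0 ≤ specNorm (chebU (Matrix (Fin n) (Fin n) ℝ) (m+2-(i+2)) Mt) :=
        RKCaux.specNorm_nonneg _
      have hu : specNorm (chebU (Matrix (Fin n) (Fin n) ℝ) (m+2-(i+2)) Mt) ≤ Us :=
        hUsle _ (by omega)
      -- the scalar bound
      have hrq : (b (m+2)/b (i+2)) * (μ (i+2) * Δt) ≤ 3 * ω1 * Δt := by
        have hkey : (b (m+2)/b (i+2)) * (μ (i+2) * Δt) = 2 * ω1 * Δt * (b (m+2)/b (i+1)) := by
          rw [hμi]; field_simp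
        have hr := hbratio (i+1) (m+2) (by omega) hm
        rw [hkey]
        nlinarith [mul_pos hω1 hΔt, div_pos hbm2 hbi1]
      have hrq0 : 0 ≤ (b (m+2)/b (i+2)) * (μ (i+2) * Δt) := by positivity
      -- put it all together
      rw [norm_smul, Real.norm_eq_abs, abs_of_pos (div_pos hbm2 hbi2)]
      calc (b (m+2)/b (i+2)) * ‖Matrix.toEuclideanLin
              (chebU (Matrix (Fin n) (Fin n) ℝ) (m+2-(i+2)) Mt) (f (i+2))‖
          ≤ (b (m+2)/b (i+2)) * (specNorm (chebU (Matrix (Fin n) (Fin n) ℝ) (m+2-(i+2)) Mt)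
              * ((μ (i+2) * Δt) * (δ * (‖e (i+1)‖ + MR * ‖yhat‖)))) := by
            refine mul_le_mul_of_nonneg_left ?_ (le_of_lt (div_pos hbm2 hbi2))
            refine le_trans (RKCaux.norm_TL_le _ _) ?_
            exact mul_le_mul_of_nonneg_left hfb hu0
        _ = ((b (m+2)/b (i+2)) * (μ (i+2) * Δt)
              * specNorm (chebU (Matrix (Fin n) (Fin n) ℝ) (m+2-(i+2)) Mt))
              * (δ * (‖e (i+1)‖ + MR * ‖yhat‖)) := by ring
        _ ≤ ((3 * ω1 * Δt) * Us) * (δ * (‖e (i+1)‖ + MR * ‖yhat‖)) := by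
            refine mul_le_mul_of_nonneg_right ?_ (by positivity)
            exact mul_le_mul hrq hu hu0 (by positivity)
        _ = Θ * (‖e (i+1)‖ + MR * ‖yhat‖) := by rw [hΘ]; ring
    -- numeric induction
    have hnum := RKCaux.rkc_num (fun j => ‖e j‖) (MR * ‖yhat‖) Θ hΘ0 s
      (by simp [he0]) (by simp [he1]) hnorm
    have hse : rs = e s := by rw [hrs, hedefj s]
    calc ‖rs‖ = ‖e s‖ := by rw [hse]
      _ ≤ MR * ‖yhat‖ * ((1+Θ)^(s-1) - 1) := hnum s le_rfl
      _ = MR * ((1 + Θ)^(s-1) - 1) * ‖yhat‖ := by ring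
end
end

section
/- Let g : ℝⁿ → ℝᵐ be twice continuously differentiable with ‖g″(x)‖ ≤ M for all x ∈ ℝⁿ, where ‖g″(x)‖ is the operator norm of the second Fréchet derivative of g at x as a bilinear map. Let u > 0, Δt > 0, and set δ = √u / Δt. Let y, d ∈ ℝⁿ and r ∈ ℝᵐ satisfy ‖d‖ ≤ D·Δt and ‖r‖ ≤ R·u for constants D, R ≥ 0. Then ‖ δ⁻¹ ( g(y + δ d) + r − g(y) ) − g′(y) d ‖ ≤ ( M D²/2 + R ) · √u · Δt, where g′(y) denotes the Fréchet derivative of g at y. -/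
/-!
Taylor's theorem with a second-order remainder bounds `g (y + h) - g y - g′(y) h` by `M ‖h‖² / 2`.
Applied to `h = δ d` and divided by `δ`, the truncation error is `M δ ‖d‖² / 2` while the
perturbation contributes `‖r‖ / δ`; the choice `δ = √u / Δt` turns both into multiples of `√u Δt`.
-/

open Set

variable {E F : Type*} [NormedAddCommGroup E] [NormedSpace ℝ E]
  [NormedAddCommGroup F] [NormedSpace ℝ F]

theorem norm_fderiv_sub_fderiv_le_of_norm_iteratedFDeriv_two_le {g : E → F}
    (hg : ContDiff ℝ 2 g) {M : ℝ} (hM : ∀ x, ‖iteratedFDeriv ℝ 2 g x‖ ≤ M) (a b : E) :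
    ‖fderiv ℝ g a - fderiv ℝ g b‖ ≤ M * ‖a - b‖ := by
  have hdiff : Differentiable ℝ (fderiv ℝ g) :=
    (hg.fderiv_right (m := 1) le_rfl).differentiable one_ne_zero
  have hbound : ∀ x, ‖fderiv ℝ (fderiv ℝ g) x‖ ≤ M := fun x => by
    rw [← norm_iteratedFDeriv_one, norm_iteratedFDeriv_fderiv]
    exact hM x
  exact convex_univ.norm_image_sub_le_of_norm_fderiv_le (fun x _ => hdiff x)
    (fun x _ => hbound x) (mem_univ b) (mem_univ a)

theorem norm_image_add_sub_sub_fderiv_le {g : E → F} (hg : Differentiable ℝ g) {M : ℝ} {y : E}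
    (hLip : ∀ z, ‖fderiv ℝ g z - fderiv ℝ g y‖ ≤ M * ‖z - y‖) (h : E) :
    ‖g (y + h) - g y - fderiv ℝ g y h‖ ≤ M / 2 * ‖h‖ ^ 2 := by
  set φ : ℝ → F := fun t => g (y + t • h) - g y - t • fderiv ℝ g y h
  have hφ : ∀ t : ℝ, HasDerivAt φ (fderiv ℝ g (y + t • h) h - fderiv ℝ g y h) t := fun t => by
    have hline : HasDerivAt (fun s : ℝ => y + s • h) h t := by
      simpa using ((hasDerivAt_id t).smul_const h).const_add y
    have hlin : HasDerivAt (fun s : ℝ => s • fderiv ℝ g y h) (fderiv ℝ g y h) t := by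
      simpa using (hasDerivAt_id t).smul_const (fderiv ℝ g y h)
    exact (((hg _).hasFDerivAt.comp_hasDerivAt t hline).sub_const (g y)).sub hlin
  have hφ_deriv_le : ∀ t ∈ Ico (0 : ℝ) 1,
      ‖fderiv ℝ g (y + t • h) h - fderiv ℝ g y h‖ ≤ M * ‖h‖ ^ 2 * t := fun t ht => by
    calc ‖fderiv ℝ g (y + t • h) h - fderiv ℝ g y h‖
        ≤ ‖fderiv ℝ g (y + t • h) - fderiv ℝ g y‖ * ‖h‖ :=
          (fderiv ℝ g (y + t • h) - fderiv ℝ g y).le_opNorm h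
      _ ≤ M * ‖t • h‖ * ‖h‖ := by
          gcongr; simpa using hLip (y + t • h)
      _ = M * ‖h‖ ^ 2 * t := by rw [norm_smul, Real.norm_of_nonneg ht.1]; ring
  have hB : ∀ t : ℝ, HasDerivAt (fun t => M * ‖h‖ ^ 2 * t ^ 2 / 2) (M * ‖h‖ ^ 2 * t) t :=
    fun t => by
      refine (((hasDerivAt_pow 2 t).const_mul (M * ‖h‖ ^ 2)).div_const 2).congr_deriv ?_
      push_cast; ring
  -- Comparing `‖φ‖` with `t ↦ M ‖h‖² t² / 2`, instead of bounding `φ'` by a constant, gains `1/2`.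
  have hφ_one := image_norm_le_of_norm_deriv_right_le_deriv_boundary
    (fun t _ => (hφ t).continuousAt.continuousWithinAt) (fun t _ => (hφ t).hasDerivWithinAt)
    (by simp [φ]) hB hφ_deriv_le (right_mem_Icc.2 zero_le_one)
  simpa [φ, mul_div_right_comm] using hφ_one

theorem norm_inv_smul_perturbed_sub_fderiv_le {g : E → F} (hg : Differentiable ℝ g) {M : ℝ}
    {y : E} (hLip : ∀ z, ‖fderiv ℝ g z - fderiv ℝ g y‖ ≤ M * ‖z - y‖) {δ : ℝ} (hδ : 0 < δ)
    (d : E) (r : F) :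
    ‖δ⁻¹ • (g (y + δ • d) + r - g y) - fderiv ℝ g y d‖ ≤ M / 2 * δ * ‖d‖ ^ 2 + δ⁻¹ * ‖r‖ := by
  have hsplit : δ⁻¹ • (g (y + δ • d) + r - g y) - fderiv ℝ g y d
      = δ⁻¹ • (g (y + δ • d) - g y - fderiv ℝ g y (δ • d)) + δ⁻¹ • r := by
    rw [(fderiv ℝ g y).map_smul, smul_sub _ _ (δ • _), smul_smul, inv_mul_cancel₀ hδ.ne',
      one_smul]
    module
  have htaylor := norm_image_add_sub_sub_fderiv_le hg hLip (δ • d)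
  rw [norm_smul, Real.norm_of_nonneg hδ.le] at htaylor
  rw [hsplit]
  refine (norm_add_le _ _).trans ?_
  rw [norm_smul, norm_smul, Real.norm_of_nonneg (inv_nonneg.2 hδ.le)]
  calc δ⁻¹ * ‖g (y + δ • d) - g y - fderiv ℝ g y (δ • d)‖ + δ⁻¹ * ‖r‖
      ≤ δ⁻¹ * (M / 2 * (δ * ‖d‖) ^ 2) + δ⁻¹ * ‖r‖ := by gcongr
    _ = M / 2 * δ * ‖d‖ ^ 2 + δ⁻¹ * ‖r‖ := by field_simp

theorem jacobian_difference_quotient_estimate_general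
    {n m : ℕ} (g : EuclideanSpace ℝ (Fin n) → EuclideanSpace ℝ (Fin m))
    (hg : ContDiff ℝ 2 g) (M : ℝ) (hM : ∀ x, ‖iteratedFDeriv ℝ 2 g x‖ ≤ M)
    (u Δt : ℝ) (hu : 0 < u) (hΔt : 0 < Δt)
    (δ : ℝ) (hδ : δ = Real.sqrt u / Δt)
    (y d : EuclideanSpace ℝ (Fin n)) (r : EuclideanSpace ℝ (Fin m))
    (D R : ℝ)
    (hd : ‖d‖ ≤ D * Δt) (hr : ‖r‖ ≤ R * u) :
    ‖δ⁻¹ • (g (y + δ • d) + r - g y) - fderiv ℝ g y d‖ ≤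
      (M * D ^ 2 / 2 + R) * Real.sqrt u * Δt := by
  have hM0 : 0 ≤ M := (norm_nonneg _).trans (hM y)
  have hsqrt : 0 < Real.sqrt u := Real.sqrt_pos.2 hu
  have hδ0 : 0 < δ := hδ ▸ div_pos hsqrt hΔt
  calc ‖δ⁻¹ • (g (y + δ • d) + r - g y) - fderiv ℝ g y d‖
      ≤ M / 2 * δ * ‖d‖ ^ 2 + δ⁻¹ * ‖r‖ :=
        norm_inv_smul_perturbed_sub_fderiv_le (hg.differentiable two_ne_zero)
          (fun z => norm_fderiv_sub_fderiv_le_of_norm_iteratedFDeriv_two_le hg hM z y) hδ0 d r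
    _ ≤ M / 2 * δ * (D * Δt) ^ 2 + δ⁻¹ * (R * u) := by gcongr
    _ = (M * D ^ 2 / 2 + R) * Real.sqrt u * Δt := by
        rw [hδ]
        field_simp
        rw [Real.sq_sqrt hu.le]
        ring

/-- low-precision Jacobian approximation estimate: the difference quotient
with step `δ = √u/Δt` applied to a perturbed evaluation of `g` approximates the directional
derivative `g′(y)d` with error at most `(M D²/2 + R) √u Δt`. -/
theorem jacobian_difference_quotient_estimate
    {n m : ℕ} (g : EuclideanSpace ℝ (Fin n) → EuclideanSpace ℝ (Fin m))
    (hg : ContDiff ℝ 2 g) (M : ℝ) (hM : ∀ x, ‖iteratedFDeriv ℝ 2 g x‖ ≤ M)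
    (u Δt : ℝ) (hu : 0 < u) (hΔt : 0 < Δt)
    (δ : ℝ) (hδ : δ = Real.sqrt u / Δt)
    (y d : EuclideanSpace ℝ (Fin n)) (r : EuclideanSpace ℝ (Fin m))
    (D R : ℝ) (hD : 0 ≤ D) (hR : 0 ≤ R)
    (hd : ‖d‖ ≤ D * Δt) (hr : ‖r‖ ≤ R * u) :
    ‖δ⁻¹ • (g (y + δ • d) + r - g y) - fderiv ℝ g y d‖ ≤
      (M * D ^ 2 / 2 + R) * Real.sqrt u * Δt :=
  jacobian_difference_quotient_estimate_general g hg M hM u Δt hu hΔt δ hδ y d r D R hd hr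
end
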